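/- arXiv:2305.02714 — 10 statements merged into one kernel-verified Lean document; each statement's English description precedes it below -/
import Mathlib

section
/- For λ ∈ ℂ with |λ| > 1, the multiplication operator M_λ : f ↦ λ·f on the Fréchet space H(ℂ) of entire functions (with the compact-open topology) does not have the positive shadowing property. -/
/-!
Let `Q = |λ| M` with `M` large and let `S_j` be the partial sums of `∑ zⁱ / Qⁱ⁺¹ = 1 / (Q - z)`.
Then `F_j = λʲ S_j` is a δ-pseudotrajectory of `M_λ`: consecutive errors are single monomials of
size at most `1 / M` on the disc of radius `M`. If `f` shadowed it, `|λʲ (S_j - f)|` would stay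
bounded on the unit disc, so `S_j → f` there because `|λ| > 1`, i.e. `f = 1 / (Q - z)` near `0`.
Then the entire function `(Q - z) f(z)` equals `1` near `0`, hence everywhere, which fails at `Q`.
-/

open Filter Topology Finset

/-- The k-th seminorm on entire functions: sup of ‖f z‖ on the ball of radius k. -/
noncomputable def entireSeminorm (k : ℕ) (f : ℂ → ℂ) : ℝ :=
  sSup ((fun z => ‖f z‖) '' Metric.ball (0 : ℂ) k)

/-- The canonical complete invariant metric on H(ℂ). -/
noncomputable def entireDist (f g : ℂ → ℂ) : ℝ :=
  ∑' k : ℕ, (1 / 2 : ℝ) ^ (k + 1) * min 1 (entireSeminorm (k + 1) (fun z => f z - g z))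

lemma hasSum_half_pow_succ : HasSum (fun k : ℕ => (1 / 2 : ℝ) ^ (k + 1)) 1 :=
  (hasSum_geometric_two' 1).congr_fun fun k => by rw [pow_succ, div_pow, one_pow]; ring

lemma exists_one_div_add_half_pow_le {δ : ℝ} (hδ : 0 < δ) :
    ∃ M : ℕ, 0 < M ∧ 1 / (M : ℝ) + (1 / 2) ^ M ≤ δ := by
  obtain ⟨n, hn⟩ := exists_nat_one_div_lt (half_pos hδ)
  have hpow : (1 / 2 : ℝ) ^ (n + 1) ≤ 1 / (n + 1 : ℕ) := by
    rw [one_div_pow, one_div_le_one_div (by positivity) (by positivity)]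
    exact_mod_cast Nat.lt_two_pow_self.le
  refine ⟨n + 1, n.succ_pos, ?_⟩
  push_cast at hpow ⊢
  linarith

section EntireDist

variable {f g : ℂ → ℂ}

lemma entireSeminorm_nonneg (k : ℕ) (f : ℂ → ℂ) : 0 ≤ entireSeminorm k f :=
  Real.sSup_nonneg (by rintro x ⟨z, _, rfl⟩; exact norm_nonneg _)

lemma entireSeminorm_le {k : ℕ} {C : ℝ} (hC : 0 ≤ C) (h : ∀ z, ‖z‖ < k → ‖f z‖ ≤ C) :
    entireSeminorm k f ≤ C :=
  Real.sSup_le (by rintro x ⟨z, hz, rfl⟩; exact h z (mem_ball_zero_iff.1 hz)) hC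

lemma norm_le_entireSeminorm (hf : Continuous f) {k : ℕ} {z : ℂ} (hz : ‖z‖ < k) :
    ‖f z‖ ≤ entireSeminorm k f :=
  le_csSup (((isCompact_closedBall (0 : ℂ) k).bddAbove_image hf.norm.continuousOn).mono
    (Set.image_mono Metric.ball_subset_closedBall)) ⟨z, mem_ball_zero_iff.2 hz, rfl⟩

lemma summable_entireDist (f g : ℂ → ℂ) :
    Summable fun k : ℕ =>
      (1 / 2 : ℝ) ^ (k + 1) * min 1 (entireSeminorm (k + 1) (fun z => f z - g z)) :=
  Summable.of_nonneg_of_le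
    (fun _ => mul_nonneg (by positivity) (le_min zero_le_one (entireSeminorm_nonneg _ _)))
    (fun _ => mul_le_of_le_one_right (by positivity) (min_le_left _ _))
    hasSum_half_pow_succ.summable

lemma half_mul_min_entireSeminorm_one_le_entireDist (f g : ℂ → ℂ) :
    1 / 2 * min 1 (entireSeminorm 1 (fun z => f z - g z)) ≤ entireDist f g := by
  simpa [entireDist] using (summable_entireDist f g).le_tsum 0 fun _ _ =>
    mul_nonneg (by positivity) (le_min zero_le_one (entireSeminorm_nonneg _ _))

lemma norm_sub_lt_of_entireDist_lt (hf : Continuous f) (hg : Continuous g) {r : ℝ} (hr : r ≤ 1)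
    (h : entireDist f g < r / 2) {z : ℂ} (hz : ‖z‖ < 1) : ‖f z - g z‖ < r := by
  have hmin : min 1 (entireSeminorm 1 (fun z => f z - g z)) < r := by
    linarith [half_mul_min_entireSeminorm_one_le_entireDist f g]
  have hseminorm : entireSeminorm 1 (fun z => f z - g z) < r :=
    (min_lt_iff.1 hmin).resolve_left (not_lt.2 hr)
  exact (norm_le_entireSeminorm (hf.sub hg) (by simpa using hz)).trans_lt hseminorm

lemma entireDist_le_of_norm_sub_le {η : ℝ} {M : ℕ} (hη : 0 ≤ η)
    (h : ∀ z, ‖z‖ < M → ‖f z - g z‖ ≤ η) : entireDist f g ≤ η + (1 / 2) ^ M := by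
  have head : ∑ k ∈ range M,
      (1 / 2 : ℝ) ^ (k + 1) * min 1 (entireSeminorm (k + 1) (fun z => f z - g z)) ≤ η :=
    calc _ ≤ ∑ k ∈ range M, (1 / 2 : ℝ) ^ (k + 1) * η := by
          refine sum_le_sum fun k hk => mul_le_mul_of_nonneg_left ?_ (by positivity)
          refine (min_le_right _ _).trans (entireSeminorm_le hη fun z hz => h z ?_)
          exact hz.trans_le (by exact_mod_cast mem_range.1 hk)
      _ = (∑ k ∈ range M, (1 / 2 : ℝ) ^ (k + 1)) * η := by rw [sum_mul]
      _ ≤ 1 * η := by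
          gcongr
          exact (hasSum_half_pow_succ.summable.sum_le_tsum _ fun _ _ => by positivity).trans
            hasSum_half_pow_succ.tsum_eq.le
      _ = η := one_mul η
  have tail : ∑' k, (1 / 2 : ℝ) ^ (k + M + 1) *
      min 1 (entireSeminorm (k + M + 1) (fun z => f z - g z)) ≤ (1 / 2) ^ M :=
    calc _ ≤ ∑' k : ℕ, (1 / 2 : ℝ) ^ M * (1 / 2) ^ (k + 1) := by
          refine Summable.tsum_le_tsum (fun k => ?_)
            ((summable_nat_add_iff M).2 (summable_entireDist f g))
            (hasSum_half_pow_succ.summable.mul_left _)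
          rw [show (1 / 2 : ℝ) ^ (k + M + 1) = (1 / 2) ^ M * (1 / 2) ^ (k + 1) by ring]
          exact mul_le_of_le_one_right (by positivity) (min_le_left _ _)
      _ = (1 / 2) ^ M := by rw [tsum_mul_left, hasSum_half_pow_succ.tsum_eq, mul_one]
  rw [entireDist, ← (summable_entireDist f g).sum_add_tsum_nat_add M]
  exact add_le_add head tail

end EntireDist

lemma tendsto_of_norm_pow_mul_sub_le {𝕜 : Type*} [NormedDivisionRing 𝕜] {l w : 𝕜} {s : ℕ → 𝕜}
    {C : ℝ} (hl : 1 < ‖l‖) (h : ∀ j, ‖l ^ j * (s j - w)‖ ≤ C) : Tendsto s atTop (𝓝 w) := by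
  rw [tendsto_iff_norm_sub_tendsto_zero]
  have hdecay : Tendsto (fun j : ℕ => C * ‖l‖⁻¹ ^ j) atTop (𝓝 0) := by
    simpa using (tendsto_pow_atTop_nhds_zero_of_lt_one (by positivity)
      (inv_lt_one_of_one_lt₀ hl)).const_mul C
  refine squeeze_zero (fun _ => norm_nonneg _) (fun j => ?_) hdecay
  rw [inv_pow, ← div_eq_mul_inv, le_div_iff₀ (pow_pos (one_pos.trans hl) j), mul_comm]
  simpa [norm_mul, norm_pow] using h j

lemma hasSum_pow_div_pow_succ {𝕜 : Type*} [NormedField 𝕜] {Q z : 𝕜} (hz : ‖z‖ < ‖Q‖) :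
    HasSum (fun i : ℕ => z ^ i / Q ^ (i + 1)) (Q - z)⁻¹ := by
  have hQ : Q ≠ 0 := norm_pos_iff.1 ((norm_nonneg z).trans_lt hz)
  have hgeom := (hasSum_geometric_of_norm_lt_one (ξ := z / Q)
    (by rwa [norm_div, div_lt_one ((norm_nonneg z).trans_lt hz)])).mul_left Q⁻¹
  rw [show (Q - z)⁻¹ = Q⁻¹ * (1 - z / Q)⁻¹ by
    rw [← mul_inv, mul_sub, mul_one, mul_div_cancel₀ _ hQ]]
  exact hgeom.congr_fun fun i => by rw [div_pow, pow_succ]; field_simp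

/-- The pseudotrajectory of the proof: consecutive terms differ by the single monomial
`l ^ (j + 1) * z ^ j / Q ^ (j + 1)`. -/
lemma entireDist_mul_pow_mul_partialSum_le {l Q : ℂ} {M : ℕ} (hl : 0 < ‖l‖) (hM : 0 < M)
    (hQ : ‖Q‖ = ‖l‖ * M) (j : ℕ) :
    entireDist (fun z => l * (l ^ j * ∑ i ∈ range j, z ^ i / Q ^ (i + 1)))
      (fun z => l ^ (j + 1) * ∑ i ∈ range (j + 1), z ^ i / Q ^ (i + 1)) ≤
      1 / M + (1 / 2) ^ M := by
  refine entireDist_le_of_norm_sub_le (by positivity) fun z hz => ?_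
  have hstep : l * (l ^ j * ∑ i ∈ range j, z ^ i / Q ^ (i + 1)) -
      l ^ (j + 1) * ∑ i ∈ range (j + 1), z ^ i / Q ^ (i + 1) =
      -(l ^ (j + 1) * (z ^ j / Q ^ (j + 1))) := by
    rw [sum_range_succ]; ring
  have hM' : (0 : ℝ) < M := by exact_mod_cast hM
  rw [hstep, norm_neg, norm_mul, norm_div, norm_pow, norm_pow, norm_pow, hQ]
  calc ‖l‖ ^ (j + 1) * (‖z‖ ^ j / (‖l‖ * M) ^ (j + 1))
      ≤ ‖l‖ ^ (j + 1) * ((M : ℝ) ^ j / (‖l‖ * M) ^ (j + 1)) := by gcongr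
    _ = 1 / M := by field_simp; ring

lemma not_eventuallyEq_inv_sub {f : ℂ → ℂ} (hf : Differentiable ℂ f) {Q z₀ : ℂ} (hz₀ : z₀ ≠ Q) :
    ¬ f =ᶠ[𝓝 z₀] fun z => (Q - z)⁻¹ := by
  intro hfeq
  have hmul : (fun z => (Q - z) * f z) =ᶠ[𝓝 z₀] fun _ => 1 := by
    filter_upwards [hfeq, isOpen_ne.mem_nhds hz₀] with z hz hzQ
    rw [hz, mul_inv_cancel₀ (sub_ne_zero.2 (Ne.symm hzQ))]
  have hanalytic : AnalyticOnNhd ℂ (fun z => (Q - z) * f z) Set.univ :=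
    Complex.analyticOnNhd_univ_iff_differentiable.2
      (((differentiable_const Q).sub differentiable_id).mul hf)
  simpa using congr_fun (hanalytic.eq_of_eventuallyEq analyticOnNhd_const hmul) Q

/-- For |λ| > 1, the multiplication operator M_λ on H(ℂ) does not have the
positive shadowing property. -/
theorem stmt2 (l : ℂ) (hl : 1 < ‖l‖) :
    ¬ (∀ ε > (0 : ℝ), ∃ δ > (0 : ℝ), ∀ F : ℕ → (ℂ → ℂ),
        (∀ j, Differentiable ℂ (F j)) →
        (∀ j, entireDist (fun z => l * F j z) (F (j + 1)) ≤ δ) →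
        ∃ f : ℂ → ℂ, Differentiable ℂ f ∧
          ∀ j, entireDist (F j) (fun z => l ^ j * f z) < ε) := by
  intro hshadow
  obtain ⟨δ, hδ, hδshadow⟩ := hshadow (1 / 4) (by norm_num)
  obtain ⟨M, hM, hMδ⟩ := exists_one_div_add_half_pow_le hδ
  set Q : ℂ := ((‖l‖ * M : ℝ) : ℂ)
  have hQ : ‖Q‖ = ‖l‖ * M := by
    rw [Complex.norm_real, Real.norm_of_nonneg (by positivity)]
  have hQ1 : 1 < ‖Q‖ := by
    rw [hQ]
    exact hl.trans_le (le_mul_of_one_le_right (norm_nonneg l) (by exact_mod_cast hM))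
  have hpseudo (j : ℕ) := (entireDist_mul_pow_mul_partialSum_le (one_pos.trans hl) hM hQ j).trans hMδ
  obtain ⟨f, hf, hfshadow⟩ := hδshadow (fun j z => l ^ j * ∑ i ∈ range j, z ^ i / Q ^ (i + 1))
    (fun j => by fun_prop) hpseudo
  refine not_eventuallyEq_inv_sub hf (z₀ := 0) (Q := Q) (norm_pos_iff.1 (one_pos.trans hQ1)).symm ?_
  filter_upwards [Metric.ball_mem_nhds (0 : ℂ) one_pos] with z hz
  have hz1 : ‖z‖ < 1 := mem_ball_zero_iff.1 hz
  refine tendsto_nhds_unique (tendsto_of_norm_pow_mul_sub_le (C := 1 / 2) hl fun j => ?_)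
    (hasSum_pow_div_pow_succ (hz1.trans hQ1)).tendsto_sum_nat
  rw [mul_sub]
  exact (norm_sub_lt_of_entireDist_lt (by fun_prop) (hf.continuous.const_mul _) (by norm_num)
    ((hfshadow j).trans_eq (by norm_num)) hz1).le
end

section
/- Let X be the space of finitely supported scalar sequences with the supremum norm and T = 2·Id. Then T does not have the positive shadowing property: for every δ > 0 the δ-pseudotrajectory x^{(0)} = 0, x^{(j)} = (2^{j−1}δ, 2^{j−2}δ, …, 2δ, δ, 0, 0, …) cannot be 1-shadowed by any trajectory of T. -/
/-!
Consecutive points of the pseudotrajectory differ from `T` applied to the previous one only in the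
new coordinate, by `δ`. But a finitely supported `x` vanishes at some coordinate `n`, where every
orbit point `2^j x` vanishes too, while the pseudotrajectory's `n`-th coordinate `2^{j-1-n} δ`
exceeds `1` for large `j`.
-/

noncomputable def supNorm (g : ℕ → ℝ) : ℝ := ⨆ n, |g n|

lemma supNorm_le {g : ℕ → ℝ} {c : ℝ} (h : ∀ n, |g n| ≤ c) : supNorm g ≤ c :=
  ciSup_le h

lemma abs_le_supNorm {g : ℕ → ℝ} (hg : (Function.support g).Finite) (n : ℕ) :
    |g n| ≤ supNorm g := by
  have hrange : (Set.range g).Finite :=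
    ((hg.image g).insert 0).subset (Function.range_subset_insert_image_support g)
  exact le_ciSup (Set.range_comp abs g ▸ hrange.image abs).bddAbove n

noncomputable def pseudoOrbit (δ : ℝ) (j n : ℕ) : ℝ :=
  if n < j then 2 ^ (j - 1 - n) * δ else 0

lemma support_pseudoOrbit_subset (δ : ℝ) (j : ℕ) :
    Function.support (pseudoOrbit δ j) ⊆ Set.Iio j := fun n hn => by
  by_contra h
  exact hn (if_neg h)

lemma support_pseudoOrbit_finite (δ : ℝ) (j : ℕ) :
    (Function.support (pseudoOrbit δ j)).Finite :=
  (Set.finite_Iio j).subset (support_pseudoOrbit_subset δ j)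

lemma two_mul_pseudoOrbit_sub_pseudoOrbit_succ (δ : ℝ) (j n : ℕ) :
    2 * pseudoOrbit δ j n - pseudoOrbit δ (j + 1) n = if n = j then -δ else 0 := by
  unfold pseudoOrbit
  rcases lt_trichotomy n j with h | rfl | h
  · rw [if_pos h, if_pos (by omega), if_neg h.ne, show j + 1 - 1 - n = j - 1 - n + 1 by omega,
      pow_succ]
    ring
  · simp
  · rw [if_neg (by omega), if_neg (by omega), if_neg h.ne']
    ring

lemma supNorm_two_mul_pseudoOrbit_sub_pseudoOrbit_succ_le {δ : ℝ} (hδ : 0 ≤ δ) (j : ℕ) :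
    supNorm (fun n => 2 * pseudoOrbit δ j n - pseudoOrbit δ (j + 1) n) ≤ δ :=
  supNorm_le fun n => by
    rw [two_mul_pseudoOrbit_sub_pseudoOrbit_succ]
    split_ifs <;> simp [abs_of_nonneg hδ, hδ]

lemma pow_mul_le_supNorm_pseudoOrbit_sub {x : ℕ → ℝ} (hx : (Function.support x).Finite)
    {n : ℕ} (hxn : x n = 0) (δ : ℝ) (k : ℕ) :
    2 ^ k * δ ≤ supNorm (fun m => pseudoOrbit δ (n + 1 + k) m - 2 ^ (n + 1 + k) * x m) := by
  have hsupport : (Function.support fun m =>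
      pseudoOrbit δ (n + 1 + k) m - 2 ^ (n + 1 + k) * x m).Finite :=
    ((support_pseudoOrbit_finite δ _).union hx).subset <|
      (Function.support_sub _ _).trans <|
        Set.union_subset_union_right _ (Function.support_mul_subset_right _ _)
  calc 2 ^ k * δ
      = pseudoOrbit δ (n + 1 + k) n - 2 ^ (n + 1 + k) * x n := by
        rw [pseudoOrbit, if_pos (by omega), show n + 1 + k - 1 - n = k by omega, hxn]
        ring
    _ ≤ |pseudoOrbit δ (n + 1 + k) n - 2 ^ (n + 1 + k) * x n| := le_abs_self _
    _ ≤ _ := abs_le_supNorm hsupport n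

/-- On the space of finitely supported sequences with the sup norm, T = 2·Id does not have the
positive shadowing property: for every δ > 0 the displayed δ-pseudotrajectory is finitely
supported, is a δ-pseudotrajectory, and cannot be 1-shadowed by any finitely supported point. -/
theorem stmt4 (δ : ℝ) (hδ : 0 < δ) :
    (∀ j : ℕ,
      (Function.support (fun n : ℕ => if n < j then (2 : ℝ) ^ (j - 1 - n) * δ else 0)).Finite) ∧
    (∀ j : ℕ, supNorm (fun n : ℕ =>
        2 * (if n < j then (2 : ℝ) ^ (j - 1 - n) * δ else 0) -
          (if n < j + 1 then (2 : ℝ) ^ (j + 1 - 1 - n) * δ else 0)) ≤ δ) ∧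
    ¬ ∃ x : ℕ → ℝ, (Function.support x).Finite ∧
        ∀ j : ℕ, supNorm (fun n : ℕ =>
          (if n < j then (2 : ℝ) ^ (j - 1 - n) * δ else 0) - 2 ^ j * x n) < 1 := by
  refine ⟨support_pseudoOrbit_finite δ,
    supNorm_two_mul_pseudoOrbit_sub_pseudoOrbit_succ_le hδ.le, ?_⟩
  rintro ⟨x, hx, hshadow⟩
  obtain ⟨n, hn⟩ := hx.infinite_compl.nonempty
  obtain ⟨k, hk⟩ := pow_unbounded_of_one_lt δ⁻¹ one_lt_two
  have hlarge : 1 < 2 ^ k * δ := by rwa [inv_lt_iff_one_lt_mul₀ hδ] at hk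
  have hfar := pow_mul_le_supNorm_pseudoOrbit_sub hx (Function.notMem_support.1 hn) δ k
  exact (hlarge.trans_le hfar).not_gt (hshadow (n + 1 + k))
end

section
/- Let X be a uniform space and f : X → X a continuous map with the finite shadowing property. If f is chain transitive and for every entourage V there exists a V-small set A ⊆ X with cofinite return set N_f(A,A), then f is topologically mixing. -/
/-!
Let `S` be a small set with cofinite return times and `p ∈ S`, and take chains `a ⇝ p ⇝ b` given by
chain transitivity. If `s ∈ S` and `f^[m] s ∈ S`, then `a ⇝ s, f s, …, f^[m] s ⇝ p ⇝ b` is again a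
chain, because the two new jumps (onto `s` and off `f^[m] s`) are small as `S` is. This gives chains
from `a` to `b` of all sufficiently large lengths, and shadowing one of them gives a point near `a`,
hence in `A`, whose iterate of that length is near `b`, hence in `B`.
-/

open Filter Uniformity UniformSpace
open scoped SetRel

section

variable {X : Type*}

def ChainReach (f : X → X) (U : SetRel X X) (n : ℕ) (x y : X) : Prop :=
  ∃ c : ℕ → X, c 0 = x ∧ c n = y ∧ ∀ j < n, (f (c j), c (j + 1)) ∈ U

def ShadowsChains (f : X → X) (U V : SetRel X X) : Prop :=
  ∀ (k : ℕ) (x : ℕ → X), (∀ j < k, (f (x j), x (j + 1)) ∈ U) → ∃ y, ∀ j ≤ k, (x j, f^[j] y) ∈ V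

namespace ChainReach

variable {f : X → X} {U W : SetRel X X} {m n : ℕ} {x y z : X}

lemma mono (h : ChainReach f U n x y) (hUW : U ⊆ W) : ChainReach f W n x y :=
  let ⟨c, hc0, hcn, hc⟩ := h
  ⟨c, hc0, hcn, fun j hj => hUW (hc j hj)⟩

lemma trans (h₁ : ChainReach f U m x y) (h₂ : ChainReach f U n y z) :
    ChainReach f U (m + n) x z := by
  obtain ⟨c₁, hc₁0, hc₁m, hc₁⟩ := h₁
  obtain ⟨c₂, hc₂0, hc₂n, hc₂⟩ := h₂
  refine ⟨fun j => if j ≤ m then c₁ j else c₂ (j - m), by simp [hc₁0], ?_, fun j hj => ?_⟩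
  · by_cases hn : n = 0
    · simp [hn, hc₁m, ← hc₂0, ← hc₂n]
    · simp [show ¬m + n ≤ m by omega, hc₂n]
  · by_cases hjm : j < m
    · simpa [hjm.le, Nat.succ_le_of_lt hjm] using hc₁ j hjm
    · have hstep := hc₂ (j - m) (by omega)
      rw [show j - m + 1 = j + 1 - m by omega] at hstep
      obtain rfl | hjm' := eq_or_lt_of_le (not_lt.1 hjm)
      · simpa [hc₁m, ← hc₂0] using hstep
      · simpa [hjm'.not_ge, show ¬j + 1 ≤ m by omega] using hstep

lemma iterate [U.IsRefl] (f : X → X) (n : ℕ) (x : X) : ChainReach f U n x (f^[n] x) :=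
  ⟨fun j => f^[j] x, rfl, rfl, fun j _ => by
    simp only [Function.iterate_succ_apply']
    exact U.refl _⟩

lemma comp_right [W.IsRefl] (h : ChainReach f U n x y) (hn : n ≠ 0) (hyz : (y, z) ∈ W) :
    ChainReach f (U ○ W) n x z := by
  obtain ⟨c, hc0, hcn, hc⟩ := h
  refine ⟨Function.update c n z, by simp [Function.update_of_ne (Ne.symm hn), hc0], by simp,
    fun j hj => ?_⟩
  rw [Function.update_of_ne hj.ne]
  obtain hjn | hjn := eq_or_ne (j + 1) n
  · rw [hjn, Function.update_self]
    have hlast := hc j hj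
    rw [hjn, hcn] at hlast
    exact SetRel.prodMk_mem_comp hlast hyz
  · rw [Function.update_of_ne hjn]
    exact SetRel.left_subset_comp (hc j hj)

lemma image_inter_nonempty {V : SetRel X X} {A B : Set X} (hshad : ShadowsChains f U V)
    (h : ChainReach f U n x y) (hA : ball x V ⊆ A) (hB : ball y V ⊆ B) :
    (f^[n] '' A ∩ B).Nonempty := by
  obtain ⟨c, hc0, hcn, hc⟩ := h
  obtain ⟨z, hz⟩ := hshad n c hc
  have hz0 := hz 0 n.zero_le
  have hzn := hz n le_rfl
  rw [hc0, Function.iterate_zero_apply] at hz0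
  rw [hcn] at hzn
  exact ⟨f^[n] z, ⟨z, hA hz0, rfl⟩, hB hzn⟩

end ChainReach

lemma chainReach_of_return {f : X → X} {W : SetRel X X} [W.IsRefl] {S : Set X} {p x y : X}
    {k₁ k₂ m : ℕ} (hS : S ×ˢ S ⊆ W) (hp : p ∈ S) (h₁ : ChainReach f W k₁ x p) (hk₁ : k₁ ≠ 0)
    (h₂ : ChainReach f W k₂ p y) (hm : (f^[m] '' S ∩ S).Nonempty) (hm₀ : m ≠ 0) :
    ChainReach f (W ○ W) (k₁ + m + k₂) x y := by
  obtain ⟨_, ⟨s, hs, rfl⟩, hms⟩ := hm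
  have hxs : ChainReach f (W ○ W) k₁ x s := h₁.comp_right hk₁ (hS ⟨hp, hs⟩)
  have hsp : ChainReach f (W ○ W) m s p :=
    (ChainReach.iterate f m s).comp_right hm₀ (hS ⟨hms, hp⟩)
  exact (hxs.trans hsp).trans (h₂.mono SetRel.left_subset_comp)

end

theorem stmt5_general {X : Type*} [UniformSpace X] (f : X → X)
    (hshad : ∀ V ∈ uniformity X, ∃ U ∈ uniformity X, ∀ (k : ℕ) (x : ℕ → X),
        (∀ j < k, (f (x j), x (j + 1)) ∈ U) →
        ∃ y, ∀ j ≤ k, (x j, f^[j] y) ∈ V)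
    (hct : ∀ x y : X, ∀ V ∈ uniformity X, ∃ (k : ℕ) (c : ℕ → X),
        1 ≤ k ∧ c 0 = x ∧ c k = y ∧ ∀ j < k, (f (c j), c (j + 1)) ∈ V)
    (hret : ∀ V ∈ uniformity X, ∃ A : Set X, A ×ˢ A ⊆ V ∧
        {n : ℕ | (f^[n] '' A ∩ A).Nonempty}ᶜ.Finite) :
    ∀ A B : Set X, IsOpen A → IsOpen B → A.Nonempty → B.Nonempty →
      {n : ℕ | (f^[n] '' A ∩ B).Nonempty}ᶜ.Finite := by
  intro A B hA hB ⟨a, ha⟩ ⟨b, hb⟩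
  obtain ⟨VA, hVA, haVA⟩ := UniformSpace.mem_nhds_iff.1 (hA.mem_nhds ha)
  obtain ⟨VB, hVB, hbVB⟩ := UniformSpace.mem_nhds_iff.1 (hB.mem_nhds hb)
  obtain ⟨U, hU, hUV⟩ := hshad (VA ∩ VB) (inter_mem hVA hVB)
  obtain ⟨W, hW, hWU⟩ := comp_mem_uniformity_sets hU
  have := isRefl_of_mem_uniformity hW
  obtain ⟨S, hSW, hS⟩ := hret W hW
  have hreturn : ∀ᶠ m in atTop, (f^[m] '' S ∩ S).Nonempty ∧ m ≠ 0 := by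
    rw [← Nat.cofinite_eq_atTop]
    exact (eventually_cofinite.2 hS).and (eventually_cofinite_ne 0)
  obtain ⟨_, ⟨p, -, hp⟩, -⟩ := hreturn.exists
  obtain ⟨k₁, c₁, hk₁, hc₁⟩ := hct a p W hW
  obtain ⟨k₂, c₂, -, hc₂⟩ := hct p b W hW
  rw [Set.compl_ofPred, ← eventually_cofinite, Nat.cofinite_eq_atTop]
  filter_upwards [(tendsto_sub_atTop_nat (k₁ + k₂)).eventually hreturn] with n ⟨hm, hm₀⟩
  have hchain := chainReach_of_return hSW hp ⟨c₁, hc₁⟩ (by omega) ⟨c₂, hc₂⟩ hm hm₀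
  rw [show k₁ + (n - (k₁ + k₂)) + k₂ = n by omega] at hchain
  exact (hchain.mono hWU).image_inter_nonempty (V := VA ∩ VB) hUV
    ((ball_mono Set.inter_subset_left a).trans haVA)
    ((ball_mono Set.inter_subset_right b).trans hbVB)

/-- Uniform-space version: a continuous map with the finite shadowing property which is chain
transitive and admits, for every entourage V, a V-small set with cofinite return set, is
topologically mixing. -/
theorem stmt5 {X : Type*} [UniformSpace X] (f : X → X) (hf : Continuous f)
    (hshad : ∀ V ∈ uniformity X, ∃ U ∈ uniformity X, ∀ (k : ℕ) (x : ℕ → X),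
        (∀ j < k, (f (x j), x (j + 1)) ∈ U) →
        ∃ y, ∀ j ≤ k, (x j, f^[j] y) ∈ V)
    (hct : ∀ x y : X, ∀ V ∈ uniformity X, ∃ (k : ℕ) (c : ℕ → X),
        1 ≤ k ∧ c 0 = x ∧ c k = y ∧ ∀ j < k, (f (c j), c (j + 1)) ∈ V)
    (hret : ∀ V ∈ uniformity X, ∃ A : Set X, A ×ˢ A ⊆ V ∧
        {n : ℕ | (f^[n] '' A ∩ A).Nonempty}ᶜ.Finite) :
    ∀ A B : Set X, IsOpen A → IsOpen B → A.Nonempty → B.Nonempty →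
      {n : ℕ | (f^[n] '' A ∩ B).Nonempty}ᶜ.Finite :=
  stmt5_general f hshad hct hret
end

section
/- The unweighted backward shift B on the Hardy space H² = ℓ²(ℕ₀) is chain recurrent but not topologically transitive. -/
/-!
Chain recurrence: starting from `x`, follow the orbit `Bⁿ x` until it is `δ`-close to `0` (the
tails of an `ℓ²` sequence vanish), jump to `0`, and climb back to `x` through the points
`(k / M) • S^(M - k) x`, where `S` is the right shift, a right inverse of `B`; consecutive points
miss by `‖x‖ / M ≤ δ`. Non-transitivity: `‖Bⁿ‖ ≤ 1`, so no `Bⁿ` maps the unit ball into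
`{z | 1 < ‖z‖}`.
-/

open Filter Topology Relation Metric
open scoped ENNReal

def PseudoOrbitStep {X : Type*} [PseudoMetricSpace X] (f : X → X) (δ : ℝ) (x y : X) : Prop :=
  dist (f x) y ≤ δ

def IsTopologicallyTransitive {X : Type*} [TopologicalSpace X] (f : X → X) : Prop :=
  ∀ U V : Set X, IsOpen U → IsOpen V → U.Nonempty → V.Nonempty →
    ∃ n : ℕ, 1 ≤ n ∧ (f^[n] '' U ∩ V).Nonempty

theorem Relation.TransGen.exists_chain {α : Type*} {r : α → α → Prop} {a b : α}
    (h : TransGen r a b) :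
    ∃ (m : ℕ) (c : ℕ → α), 1 ≤ m ∧ c 0 = a ∧ c m = b ∧ ∀ j < m, r (c j) (c (j + 1)) := by
  induction h with
  | @single b hab =>
    exact ⟨1, fun j => if j = 0 then a else b, le_rfl, rfl, rfl, fun j hj => by
      simpa [Nat.lt_one_iff.mp hj] using hab⟩
  | @tail b d _ hbd ih =>
    obtain ⟨m, c, hm, hc0, hcm, hc⟩ := ih
    refine ⟨m + 1, Function.update c (m + 1) d, by omega, by simpa, by simp, fun j hj => ?_⟩
    rcases Nat.lt_succ_iff_lt_or_eq.mp hj with hj | rfl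
    · rw [Function.update_of_ne (by omega), Function.update_of_ne (by omega)]
      exact hc j hj
    · rw [Function.update_self, Function.update_of_ne (by omega), hcm]
      exact hbd

section PseudoMetric

variable {X : Type*} [PseudoMetricSpace X]

theorem reflTransGen_pseudoOrbitStep_iterate (f : X → X) {δ : ℝ} (hδ : 0 ≤ δ) (x : X) (n : ℕ) :
    ReflTransGen (PseudoOrbitStep f δ) x (f^[n] x) := by
  induction n with
  | zero => exact .refl
  | succ n ih =>
    refine ih.tail ?_
    simpa [PseudoOrbitStep, Function.iterate_succ_apply'] using hδ

end PseudoMetric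

section Normed

variable {E : Type*} [NormedAddCommGroup E]

section RCLike

variable {𝕜 : Type*} [RCLike 𝕜] [NormedSpace 𝕜 E]

theorem reflTransGen_pseudoOrbitStep_zero_left (T : E →ₗ[𝕜] E)
    {S : E → E} (hTS : ∀ y, T (S y) = y) (hS : ∀ y, ‖S y‖ ≤ ‖y‖) (x : E) {δ : ℝ} (hδ : 0 < δ) :
    ReflTransGen (PseudoOrbitStep T δ) 0 x := by
  obtain ⟨M, hM⟩ := exists_nat_gt (‖x‖ / δ)
  have hM0 : (0 : ℝ) < M := (div_nonneg (norm_nonneg x) hδ.le).trans_lt hM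
  have hSn : ∀ i, ‖S^[i] x‖ ≤ ‖x‖ := by
    intro i
    induction i with
    | zero => rfl
    | succ i ih => exact (Function.iterate_succ_apply' S i x ▸ hS _).trans ih
  have step : ∀ k i : ℕ, PseudoOrbitStep T δ (((k : 𝕜) / M) • S^[i + 1] x)
      ((((k + 1 : ℕ) : 𝕜) / M) • S^[i] x) := by
    intro k i
    have hcoeff : (k : 𝕜) / M - ((k + 1 : ℕ) : 𝕜) / M = -(1 / M) := by
      push_cast
      ring
    rw [PseudoOrbitStep, Function.iterate_succ_apply', map_smul, hTS, dist_eq_norm, ← sub_smul,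
      hcoeff, norm_smul, norm_neg, norm_div, norm_one, RCLike.norm_natCast, one_div_mul_eq_div,
      div_le_iff₀ hM0]
    calc ‖S^[i] x‖ ≤ ‖x‖ := hSn i
      _ ≤ δ * M := by rw [div_lt_iff₀ hδ] at hM; linarith
  have climb : ∀ k i : ℕ, k + i = M →
      ReflTransGen (PseudoOrbitStep T δ) 0 (((k : 𝕜) / M) • S^[i] x) := by
    intro k
    induction k with
    | zero => intro i _; simpa using .refl
    | succ k ih => intro i hki; exact (ih (i + 1) (by omega)).tail (step k i)
  have hM0' : (M : 𝕜) ≠ 0 := by exact_mod_cast hM0.ne'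
  simpa [hM0'] using climb M 0 rfl

theorem transGen_pseudoOrbitStep_self (T : E →ₗ[𝕜] E)
    {S : E → E} (hTS : ∀ y, T (S y) = y) (hS : ∀ y, ‖S y‖ ≤ ‖y‖) {x : E}
    (hx : Tendsto (fun n => T^[n] x) atTop (𝓝 0)) {δ : ℝ} (hδ : 0 < δ) :
    TransGen (PseudoOrbitStep T δ) x x := by
  obtain ⟨N, hN⟩ := eventually_atTop.mp (hx.eventually (closedBall_mem_nhds 0 hδ))
  have jump : PseudoOrbitStep T δ (T^[N] x) 0 := by
    simpa [PseudoOrbitStep, ← Function.iterate_succ_apply' T N x] using hN (N + 1) N.le_succ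
  exact (TransGen.tail' (reflTransGen_pseudoOrbitStep_iterate T hδ.le x N) jump).trans_left
    (reflTransGen_pseudoOrbitStep_zero_left T hTS hS x hδ)

end RCLike

theorem not_isTopologicallyTransitive_of_norm_iterate_le (𝕜 : Type*) [NontriviallyNormedField 𝕜]
    [NormedSpace 𝕜 E] [Nontrivial E] {f : E → E} (hf : ∀ n x, ‖f^[n] x‖ ≤ ‖x‖) :
    ¬ IsTopologicallyTransitive f := by
  intro h
  obtain ⟨n, -, _, ⟨u, hu, rfl⟩, hv⟩ := h (ball 0 1) {z | 1 < ‖z‖} isOpen_ball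
    (isOpen_lt continuous_const continuous_norm) ⟨0, mem_ball_self one_pos⟩
    (NormedSpace.exists_lt_norm 𝕜 E 1)
  have hu : ‖u‖ < 1 := mem_ball_zero_iff.mp hu
  have hv : 1 < ‖f^[n] u‖ := hv
  linarith [hf n u]

end Normed

namespace lp

variable {E : Type*} [NormedAddCommGroup E] {p : ℝ≥0∞}

instance instNontrivial {α : Type*} {F : α → Type*} [∀ i, NormedAddCommGroup (F i)] [Nonempty α]
    [∀ i, Nontrivial (F i)] : Nontrivial (lp F p) := by
  classical
  obtain ⟨i⟩ := ‹Nonempty α›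
  obtain ⟨e, he⟩ := exists_ne (0 : F i)
  exact ⟨lp.single p i e, 0, fun h => he (by simpa using congr_arg (fun g : lp F p => g i) h)⟩

def rightShift (hp : 0 < p.toReal) (x : lp (fun _ : ℕ => E) p) : lp (fun _ : ℕ => E) p :=
  ⟨fun n => Nat.casesOn (motive := fun _ => E) n 0 x, memℓp_gen <| (summable_nat_add_iff 1).mp <|
    (lp.memℓp x).summable hp⟩

theorem norm_rightShift (hp : 0 < p.toReal) (x : lp (fun _ : ℕ => E) p) :
    ‖rightShift hp x‖ = ‖x‖ := by
  rw [norm_eq_tsum_rpow hp, norm_eq_tsum_rpow hp,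
    ((lp.memℓp (rightShift hp x)).summable hp).tsum_eq_zero_add]
  simp [rightShift, Real.zero_rpow hp.ne']

def IsBackwardShift (T : lp (fun _ : ℕ => E) p → lp (fun _ : ℕ => E) p) : Prop :=
  ∀ x n, T x n = x (n + 1)

namespace IsBackwardShift

variable {T : lp (fun _ : ℕ => E) p → lp (fun _ : ℕ => E) p} (hT : IsBackwardShift T)
include hT

theorem apply_rightShift (hp : 0 < p.toReal) (x : lp (fun _ : ℕ => E) p) :
    T (rightShift hp x) = x :=
  lp.ext <| funext fun n => hT _ n

theorem iterate_apply (k : ℕ) (x : lp (fun _ : ℕ => E) p) (n : ℕ) :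
    (T^[k] x) n = x (n + k) := by
  induction k generalizing x with
  | zero => rfl
  | succ k ih => rw [Function.iterate_succ_apply, ih, hT, add_assoc]

theorem norm_iterate (hp : 0 < p.toReal) (k : ℕ) (x : lp (fun _ : ℕ => E) p) :
    ‖T^[k] x‖ = (∑' n, ‖x (n + k)‖ ^ p.toReal) ^ (1 / p.toReal) := by
  simp only [norm_eq_tsum_rpow hp, hT.iterate_apply]

theorem norm_iterate_le (hp : 0 < p.toReal) (k : ℕ) (x : lp (fun _ : ℕ => E) p) :
    ‖T^[k] x‖ ≤ ‖x‖ := by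
  rw [hT.norm_iterate hp, norm_eq_tsum_rpow hp]
  refine Real.rpow_le_rpow (by positivity) ?_ (by positivity)
  exact tsum_comp_le_tsum_of_inj ((lp.memℓp x).summable hp) (fun _ => by positivity)
    (add_left_injective k)

theorem tendsto_iterate [Fact (1 ≤ p)] (hp : 0 < p.toReal) (x : lp (fun _ : ℕ => E) p) :
    Tendsto (fun k => T^[k] x) atTop (𝓝 0) := by
  rw [tendsto_zero_iff_norm_tendsto_zero]
  simp only [hT.norm_iterate hp]
  simpa [Real.zero_rpow (inv_pos.mpr hp).ne'] using
    (tendsto_sum_nat_add fun n => ‖x n‖ ^ p.toReal).rpow_const (Or.inr (one_div_pos.mpr hp).le)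

end IsBackwardShift

end lp

/-- The unweighted backward shift on the Hardy space H² = ℓ²(ℕ) is chain recurrent but not
topologically transitive. -/
theorem stmt9 (B : lp (fun _ : ℕ => ℂ) 2 →L[ℂ] lp (fun _ : ℕ => ℂ) 2)
    (hB : ∀ (x : lp (fun _ : ℕ => ℂ) 2) (n : ℕ), (B x : ℕ → ℂ) n = (x : ℕ → ℂ) (n + 1)) :
    (∀ x : lp (fun _ : ℕ => ℂ) 2, ∀ δ > (0 : ℝ),
        ∃ (m : ℕ) (c : ℕ → lp (fun _ : ℕ => ℂ) 2), 1 ≤ m ∧ c 0 = x ∧ c m = x ∧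
          ∀ j < m, ‖B (c j) - c (j + 1)‖ ≤ δ) ∧
    ¬ (∀ U V : Set (lp (fun _ : ℕ => ℂ) 2), IsOpen U → IsOpen V → U.Nonempty → V.Nonempty →
        ∃ n : ℕ, 1 ≤ n ∧ ((⇑B)^[n] '' U ∩ V).Nonempty) := by
  have hB : lp.IsBackwardShift ⇑B := hB
  have hp : 0 < (2 : ℝ≥0∞).toReal := by norm_num
  refine ⟨fun x δ hδ => ?_,
    not_isTopologicallyTransitive_of_norm_iterate_le ℂ (hB.norm_iterate_le hp)⟩
  obtain ⟨m, c, hm, hc0, hcm, hc⟩ := (transGen_pseudoOrbitStep_self B.toLinearMap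
    (hB.apply_rightShift hp) (fun y => (lp.norm_rightShift hp y).le) (hB.tendsto_iterate hp x)
    hδ).exists_chain
  exact ⟨m, c, hm, hc0, hcm, fun j hj => dist_eq_norm (B (c j)) (c (j + 1)) ▸ hc j hj⟩
end

section
/- Every generalized hyperbolic operator T on a Banach space X has the positive periodic shadowing property: for every ε > 0 there exists δ > 0 such that every periodic δ-pseudotrajectory of T is ε-shadowed by the trajectory of a periodic point of T. -/
/-!
Write `e n = T (x n) - x (n + 1)` for the (periodic, `δ`-small) errors of the pseudotrajectory.
It suffices to find a bounded periodic `z` with `T (z n) = z (n + 1) + e n`: then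
`T^[n] (x 0 - z 0) = x n - z n`, so the trajectory of `x 0 - z 0` is periodic and stays
`sup ‖z‖`-close to `x`. Splitting `e = a + b` along `X = M ⊕ N`, the `M`-component of `z` is the
backward series `-∑ TM^j a(n-1-j)` and the `N`-component the forward series
`∑ S^(j+1) b(n+j)`; both converge uniformly with a bound `O(δ)` because the spectral radii of `TM`
and `S` are below `1` (Gelfand's formula makes `‖TM^j‖`, `‖S^j‖` summable), and both inherit
the period of `e`, extended to `ℤ` so that the backward series makes sense.
-/

open Filter Function

theorem summable_norm_pow_of_spectralRadius_lt_one {A : Type*} [NormedRing A]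
    [NormedAlgebra ℂ A] [CompleteSpace A] {a : A} (h : spectralRadius ℂ a < 1) :
    Summable fun n => ‖a ^ n‖ := by
  obtain ⟨r, har, hr1⟩ := ENNReal.lt_iff_exists_nnreal_btwn.mp h
  refine .of_norm_bounded_eventually_nat
    (summable_geometric_of_lt_one r.2 (by exact_mod_cast hr1)) ?_
  filter_upwards [(spectrum.pow_nnnorm_pow_one_div_tendsto_nhds_spectralRadius
    a).eventually_lt_const har, eventually_gt_atTop 0] with n hn hn0
  rw [one_div, ENNReal.rpow_inv_lt_iff (by exact_mod_cast hn0), ENNReal.rpow_natCast] at hn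
  rw [norm_norm, ← coe_nnnorm]
  exact_mod_cast hn.le

section SumsOfPowers

variable {𝕜 E : Type*} [NontriviallyNormedField 𝕜] [NormedAddCommGroup E] [NormedSpace 𝕜 E]

theorem ContinuousLinearMap.summable_pow_apply [CompleteSpace E] {A : E →L[𝕜] E}
    (hA : Summable fun n => ‖A ^ n‖) {w : ℕ → E} {c : ℝ} (hw : ∀ j, ‖w j‖ ≤ c) :
    Summable fun j => (A ^ j) (w j) :=
  .of_norm_bounded (hA.mul_right c) fun j =>
    ((A ^ j).le_opNorm _).trans (mul_le_mul_of_nonneg_left (hw j) (norm_nonneg _))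

theorem ContinuousLinearMap.norm_tsum_pow_apply_le {A : E →L[𝕜] E}
    (hA : Summable fun n => ‖A ^ n‖) {w : ℕ → E} {c : ℝ} (hw : ∀ j, ‖w j‖ ≤ c) :
    ‖∑' j, (A ^ j) (w j)‖ ≤ (∑' j, ‖A ^ j‖) * c := by
  rw [← tsum_mul_right]
  exact tsum_of_norm_bounded (hA.mul_right c).hasSum fun j =>
    ((A ^ j).le_opNorm _).trans (mul_le_mul_of_nonneg_left (hw j) (norm_nonneg _))

variable (A : E →L[𝕜] E) (f : ℤ → E)

noncomputable def backwardSum (n : ℤ) : E := ∑' j : ℕ, (A ^ j) (f (n - 1 - j))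

noncomputable def forwardSum (n : ℤ) : E := ∑' j : ℕ, (A ^ j) (f (n + j))

variable {A f}

theorem norm_backwardSum_le (hA : Summable fun n => ‖A ^ n‖) {c : ℝ} (hf : ∀ n, ‖f n‖ ≤ c)
    (n : ℤ) : ‖backwardSum A f n‖ ≤ (∑' j, ‖A ^ j‖) * c :=
  A.norm_tsum_pow_apply_le hA fun _ => hf _

theorem norm_forwardSum_le (hA : Summable fun n => ‖A ^ n‖) {c : ℝ} (hf : ∀ n, ‖f n‖ ≤ c)
    (n : ℤ) : ‖forwardSum A f n‖ ≤ (∑' j, ‖A ^ j‖) * c :=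
  A.norm_tsum_pow_apply_le hA fun _ => hf _

theorem backwardSum_add_one [CompleteSpace E] (hA : Summable fun n => ‖A ^ n‖) {c : ℝ}
    (hf : ∀ n, ‖f n‖ ≤ c) (n : ℤ) : backwardSum A f (n + 1) = f n + A (backwardSum A f n) := by
  unfold backwardSum
  rw [(A.summable_pow_apply hA fun _ => hf _).tsum_eq_zero_add,
    A.map_tsum (A.summable_pow_apply hA fun _ => hf _)]
  congr 1
  · simp
  · refine tsum_congr fun j => ?_
    rw [pow_succ', mul_apply_eq_comp]
    congr 3
    push_cast
    ring

theorem forwardSum_eq_add [CompleteSpace E] (hA : Summable fun n => ‖A ^ n‖) {c : ℝ}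
    (hf : ∀ n, ‖f n‖ ≤ c) (n : ℤ) : forwardSum A f n = f n + A (forwardSum A f (n + 1)) := by
  unfold forwardSum
  rw [(A.summable_pow_apply hA fun _ => hf _).tsum_eq_zero_add,
    A.map_tsum (A.summable_pow_apply hA fun _ => hf _)]
  congr 1
  · simp
  · refine tsum_congr fun j => ?_
    rw [pow_succ', mul_apply_eq_comp]
    congr 3
    push_cast
    ring

theorem Function.Periodic.backwardSum {p : ℤ} (hf : Periodic f p) :
    Periodic (backwardSum A f) p := fun n => by
  unfold _root_.backwardSum
  congr! 3 with j
  rw [show n + p - 1 - j = n - 1 - j + p by ring, hf]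

theorem Function.Periodic.forwardSum {p : ℤ} (hf : Periodic f p) :
    Periodic (forwardSum A f) p := fun n => by
  unfold _root_.forwardSum
  congr! 3 with j
  rw [add_right_comm, hf]

end SumsOfPowers

theorem exists_bounded_solution_of_hyperbolic {X : Type*} [NormedAddCommGroup X]
    [NormedSpace ℂ X] [CompleteSpace X] {T : X →L[ℂ] X} {M N : Submodule ℂ X}
    (hMN : M.IsTopCompl N) {TM : M →L[ℂ] M} (hTM : ∀ x : M, (TM x : X) = T x)
    (hrM : spectralRadius ℂ TM < 1) {S : N →L[ℂ] N} (hS : ∀ z : N, T (S z : X) = z)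
    (hrS : spectralRadius ℂ S < 1) :
    ∃ K ≥ 0, ∀ (f : ℤ → X) (c : ℝ), (∀ n, ‖f n‖ ≤ c) → ∃ z : ℤ → X,
      (∀ n, T (z n) = z (n + 1) + f n) ∧ (∀ n, ‖z n‖ ≤ K * c) ∧
      ∀ p, Periodic f p → Periodic z p := by
  have := hMN.isClosed.completeSpace_coe
  have := hMN.isClosed'.completeSpace_coe
  have hMsum := summable_norm_pow_of_spectralRadius_lt_one (A := M →L[ℂ] M) hrM
  have hNsum := summable_norm_pow_of_spectralRadius_lt_one (A := N →L[ℂ] N) hrS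
  set PM := M.projectionOntoL N hMN
  set PN := N.projectionOntoL M hMN.symm
  refine ⟨‖PM‖ * ∑' j, ‖TM ^ j‖ + ‖S‖ * (‖PN‖ * ∑' j, ‖S ^ j‖), by positivity,
    fun f c hf => ?_⟩
  have hPM (n : ℤ) : ‖(PM ∘ f) n‖ ≤ ‖PM‖ * c :=
    (PM.le_opNorm _).trans (mul_le_mul_of_nonneg_left (hf n) (norm_nonneg _))
  have hPN (n : ℤ) : ‖(PN ∘ f) n‖ ≤ ‖PN‖ * c :=
    (PN.le_opNorm _).trans (mul_le_mul_of_nonneg_left (hf n) (norm_nonneg _))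
  set u := backwardSum TM (PM ∘ f)
  set v := forwardSum S (PN ∘ f)
  refine ⟨fun n => (S (v n) : X) - u n, fun n => ?_, fun n => ?_, fun p hp n => ?_⟩
  · have hu : u (n + 1) = PM (f n) + TM (u n) := backwardSum_add_one hMsum hPM n
    have hv : v n = PN (f n) + S (v (n + 1)) := forwardSum_eq_add hNsum hPN n
    calc T (S (v n) - u n) = v n - TM (u n) := by rw [map_sub, hS, hTM]
      _ = S (v (n + 1)) - u (n + 1) + ((PM (f n) : X) + PN (f n)) := by
          rw [hv, hu]
          push_cast
          abel
      _ = S (v (n + 1)) - u (n + 1) + f n := by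
          rw [Submodule.coe_projectionOntoL_apply, Submodule.coe_projectionOntoL_apply,
            Submodule.projectionL_add_projectionL_eq_self]
  · calc ‖(S (v n) : X) - u n‖ ≤ ‖S (v n)‖ + ‖u n‖ := norm_sub_le _ _
      _ ≤ ‖S‖ * ((∑' j, ‖S ^ j‖) * (‖PN‖ * c)) + (∑' j, ‖TM ^ j‖) * (‖PM‖ * c) :=
          add_le_add ((S.le_opNorm _).trans (mul_le_mul_of_nonneg_left
            (norm_forwardSum_le hNsum hPN n) (norm_nonneg _))) (norm_backwardSum_le hMsum hPM n)
      _ = _ := by ring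
  · simp only [u, v, (hp.comp PM).backwardSum n, (hp.comp PN).forwardSum n]

theorem iterate_sub_eq_of_map_eq_add {F X : Type*} [AddCommGroup X] [FunLike F X X]
    [AddMonoidHomClass F X X] (T : F) {x z : ℕ → X}
    (h : ∀ n, T (z n) = z (n + 1) + (T (x n) - x (n + 1))) (n : ℕ) :
    T^[n] (x 0 - z 0) = x n - z n := by
  induction n with
  | zero => rfl
  | succ n ih => rw [iterate_succ_apply', ih, map_sub, h]; abel

theorem Function.Periodic.exists_int_extension {α : Type*} {e : ℕ → α} {q : ℕ}
    (he : Periodic e q) :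
    ∃ f : ℤ → α, Periodic f q ∧ (∀ n : ℕ, f n = e n) ∧ ∀ k, ∃ n, f k = e n :=
  ⟨fun k => e (k % q).toNat, fun k => by simp only [Int.add_emod_right],
    fun n => by simp only [← Int.natCast_mod, Int.toNat_natCast, he.map_mod_nat],
    fun _ => ⟨_, rfl⟩⟩

theorem stmt10_general {X : Type*} [NormedAddCommGroup X] [NormedSpace ℂ X] [CompleteSpace X]
    (T : X →L[ℂ] X) (M N : Submodule ℂ X)
    (hMc : IsClosed (M : Set X)) (hNc : IsClosed (N : Set X)) (hcompl : IsCompl M N)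
    (TM : M →L[ℂ] M) (hTMdef : ∀ x : M, (TM x : X) = T x)
    (hrM : spectralRadius ℂ TM < 1)
    (S : N →L[ℂ] N) (hSdef : ∀ z : N, T ((S z : X)) = (z : X))
    (hrS : spectralRadius ℂ S < 1) :
    ∀ ε > (0 : ℝ), ∃ δ > (0 : ℝ), ∀ (x : ℕ → X) (q : ℕ), 0 < q →
      (∀ n, ‖T (x n) - x (n + 1)‖ ≤ δ) → (∀ n, x (n + q) = x n) →
      ∃ y : X, (⇑T)^[q] y = y ∧ ∀ n, ‖x n - (⇑T)^[n] y‖ < ε := by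
  intro ε hε
  obtain ⟨K, hK, hsolve⟩ := exists_bounded_solution_of_hyperbolic
    (Submodule.IsCompl.isTopCompl_of_isClosed hcompl hMc hNc) hTMdef hrM hSdef hrS
  refine ⟨ε / (K + 1), by positivity, fun x q _ hδ hx => ?_⟩
  have he : Periodic (fun n => T (x n) - x (n + 1)) q := fun n => by
    simp only [hx n, add_right_comm n q 1, hx (n + 1)]
  obtain ⟨f, hfper, hfe, hfrange⟩ := he.exists_int_extension
  obtain ⟨z, hz, hzK, hzper⟩ := hsolve f _ fun k => (hfrange k).elim fun n hn => hn ▸ hδ n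
  have htraj (n : ℕ) : T^[n] (x 0 - z 0) = x n - z n := by
    simpa using iterate_sub_eq_of_map_eq_add T (x := x) (z := fun n : ℕ => z n)
      (fun n => by simpa [hfe] using hz n) n
  refine ⟨x 0 - z 0, ?_, fun n => ?_⟩
  · have hxq : x q = x 0 := by simpa using hx 0
    have hzq : z q = z 0 := by simpa using hzper q hfper 0
    rw [htraj, hxq, hzq]
  · rw [htraj n, sub_sub_cancel]
    calc ‖z n‖ ≤ K * (ε / (K + 1)) := hzK n
      _ < ε := by
        rw [← mul_div_assoc, div_lt_iff₀ (by positivity)]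
        linarith

/-- Every generalized hyperbolic operator on a Banach space has the positive periodic
shadowing property. -/
theorem stmt10 {X : Type*} [NormedAddCommGroup X] [NormedSpace ℂ X] [CompleteSpace X]
    (T : X →L[ℂ] X) (M N : Submodule ℂ X)
    (hMc : IsClosed (M : Set X)) (hNc : IsClosed (N : Set X)) (hcompl : IsCompl M N)
    (hTM : ∀ x ∈ M, T x ∈ M)
    (TM : M →L[ℂ] M) (hTMdef : ∀ x : M, (TM x : X) = T x)
    (hrM : spectralRadius ℂ TM < 1)
    (hinjN : Set.InjOn ⇑T (N : Set X)) (hclosedTN : IsClosed (⇑T '' (N : Set X)))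
    (hNsub : (N : Set X) ⊆ ⇑T '' (N : Set X))
    (S : N →L[ℂ] N) (hSdef : ∀ z : N, T ((S z : X)) = (z : X))
    (hrS : spectralRadius ℂ S < 1) :
    ∀ ε > (0 : ℝ), ∃ δ > (0 : ℝ), ∀ (x : ℕ → X) (q : ℕ), 0 < q →
      (∀ n, ‖T (x n) - x (n + 1)‖ ≤ δ) → (∀ n, x (n + q) = x n) →
      ∃ y : X, (⇑T)^[q] y = y ∧ ∀ n, ‖x n - (⇑T)^[n] y‖ < ε :=
  stmt10_general T M N hMc hNc hcompl TM hTMdef hrM S hSdef hrS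
end

section
/- Let (w_n)_{n∈ℕ} be a bounded sequence of scalars. The following are equivalent: (i) lim_{n→∞} sup_{k∈ℕ} |w_k w_{k+1} ⋯ w_{k+n}|^{1/n} < 1; (ii) sup_{k∈ℕ} Σ_{n=0}^∞ |w_k w_{k+1} ⋯ w_{k+n}| < ∞; (iii) sup_{k∈ℕ} Σ_{n=0}^{k−1} |w_k w_{k−1} ⋯ w_{k−n}| < ∞. -/
open Filter

section Stmt11Aux
open Finset Real
noncomputable section

namespace Stmt11Aux

variable (w : ℕ → ℂ)

def P (k n : ℕ) : ℝ := ∏ i ∈ Finset.range (n + 1), ‖w (k + i)‖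
def R (k n : ℕ) : ℝ := ∏ i ∈ Finset.range (n + 1), ‖w (k - i)‖

lemma P_nonneg (k n : ℕ) : 0 ≤ P w k n :=
  Finset.prod_nonneg fun _ _ => norm_nonneg _
lemma R_nonneg (k n : ℕ) : 0 ≤ R w k n :=
  Finset.prod_nonneg fun _ _ => norm_nonneg _

lemma Q_eq (k n : ℕ) (h : n ≤ k) : R w k n = P w (k - n) n := by
  unfold P R
  rw [← Finset.prod_range_reflect (fun j => ‖w (k - n + j)‖) (n + 1)]
  apply Finset.prod_congr rfl
  intro i hi
  simp only [Finset.mem_range] at hi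
  have : k - n + (n + 1 - 1 - i) = k - i := by omega
  rw [this]

lemma R_split (k n n0 : ℕ) (h : n0 < n) :
    R w k n = R w k n0 * R w (k - n0 - 1) (n - n0 - 1) := by
  unfold R
  rw [show n + 1 = (n0 + 1) + (n - n0) by omega, Finset.prod_range_add,
    show n - n0 - 1 + 1 = n - n0 by omega]
  congr 1
  apply Finset.prod_congr rfl
  intro i _
  have : k - (n0 + 1 + i) = k - n0 - 1 - i := by omega
  rw [this]

lemma P_split (k n m : ℕ) : P w k (n + m + 1) = P w k n * P w (k + n + 1) m := by
  unfold P
  rw [show n + m + 1 + 1 = (n + 1) + (m + 1) by ring, Finset.prod_range_add]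
  congr 1
  apply Finset.prod_congr rfl
  intro i _
  have : k + (n + 1 + i) = k + n + 1 + i := by omega
  rw [this]
def D : Prop := ∃ M c : ℝ, 1 ≤ M ∧ 0 < c ∧ c < 1 ∧ ∀ k n, P w k n ≤ M * c ^ n

lemma geom_bound {c : ℝ} (hc0 : 0 ≤ c) (hc1 : c < 1) (m : ℕ) :
    ∑ n ∈ Finset.range m, c ^ n ≤ (1 - c)⁻¹ :=
  Summable.sum_le_tsum _ (fun i _ => pow_nonneg hc0 i) (hasSum_geometric_of_lt_one hc0 hc1).summable
    |>.trans_eq (hasSum_geometric_of_lt_one hc0 hc1).tsum_eq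

lemma D_to_ii (hD : D w) :
    ∃ C : ℝ, ∀ k m : ℕ, ∑ n ∈ Finset.range m, P w k n ≤ C := by
  obtain ⟨M, c, hM, hc0, hc1, hP⟩ := hD
  refine ⟨M * (1 - c)⁻¹, fun k m => ?_⟩
  calc ∑ n ∈ Finset.range m, P w k n ≤ ∑ n ∈ Finset.range m, M * c ^ n :=
        Finset.sum_le_sum fun n _ => hP k n
    _ = M * ∑ n ∈ Finset.range m, c ^ n := by rw [Finset.mul_sum]
    _ ≤ M * (1 - c)⁻¹ := by
        have := geom_bound hc0.le hc1 m
        nlinarith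

lemma D_to_iii (hD : D w) :
    ∃ C : ℝ, ∀ k : ℕ, ∑ n ∈ Finset.range (k + 1), R w k n ≤ C := by
  obtain ⟨M, c, hM, hc0, hc1, hP⟩ := hD
  refine ⟨M * (1 - c)⁻¹, fun k => ?_⟩
  calc ∑ n ∈ Finset.range (k + 1), R w k n
      ≤ ∑ n ∈ Finset.range (k + 1), M * c ^ n := by
        apply Finset.sum_le_sum
        intro n hn
        simp only [Finset.mem_range] at hn
        rw [Q_eq w k n (by omega)]
        exact hP _ n
    _ = M * ∑ n ∈ Finset.range (k + 1), c ^ n := by rw [Finset.mul_sum]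
    _ ≤ M * (1 - c)⁻¹ := by
        have := geom_bound hc0.le hc1 (k + 1)
        nlinarith

lemma half_pow_le {N t n : ℕ} (hN : 0 < N) (ht : n < (t + 1) * N) :
    ((1 : ℝ) / 2) ^ t ≤ 2 * ((1 / 2 : ℝ) ^ (1 / (N : ℝ))) ^ n := by
  have hNR : (0 : ℝ) < N := by exact_mod_cast hN
  have hcn : ((1 / 2 : ℝ) ^ (1 / (N : ℝ))) ^ n = (1 / 2 : ℝ) ^ ((1 / (N : ℝ)) * n) := by
    rw [Real.rpow_mul (by norm_num), Real.rpow_natCast]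
  have h2 : (2 : ℝ) * (1 / 2 : ℝ) ^ ((1 / (N : ℝ)) * n) = (1 / 2 : ℝ) ^ ((1 / (N : ℝ)) * n - 1) := by
    rw [Real.rpow_sub (by norm_num), Real.rpow_one]
    ring
  rw [hcn, h2, ← Real.rpow_natCast (1 / 2 : ℝ) t]
  rw [Real.rpow_le_rpow_left_iff_of_base_lt_one (by norm_num) (by norm_num)]
  have hcast : (n : ℝ) < ((t : ℝ) + 1) * N := by exact_mod_cast ht
  rw [sub_le_iff_le_add, mul_comm (1 / (N:ℝ)) (n:ℝ), mul_one_div, div_le_iff₀ hNR]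
  nlinarith


lemma ii_to_D (h : ∃ C : ℝ, ∀ k m : ℕ, ∑ n ∈ Finset.range m, P w k n ≤ C) : D w := by
  obtain ⟨C0, hC0⟩ := h
  set C := max C0 1 with hCdef
  have hC1 : (1 : ℝ) ≤ C := le_max_right _ _
  have hC : ∀ k m, ∑ n ∈ Finset.range m, P w k n ≤ C := fun k m => (hC0 k m).trans (le_max_left _ _)
  set N := 2 * ⌈C⌉₊ with hNdef
  have hNpos : 0 < N := by
    have : 0 < ⌈C⌉₊ := Nat.one_le_ceil_iff.mpr (by linarith)
    omega
  have hNC : 2 * C ≤ (N : ℝ) := by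
    have := Nat.le_ceil C
    push_cast [hNdef]
    linarith
  have Pbound : ∀ k n, P w k n ≤ C := fun k n =>
    (Finset.single_le_sum (fun i _ => P_nonneg w k i) (Finset.mem_range.mpr (Nat.lt_succ_self n))).trans
      (hC k (n + 1))
  have window : ∀ k, ∃ n0, n0 < N ∧ P w k n0 ≤ 1 / 2 := by
    intro k
    by_contra hcon
    push_neg at hcon
    have hlt : ∑ n ∈ Finset.range N, (1 / 2 : ℝ) < ∑ n ∈ Finset.range N, P w k n := by
      apply Finset.sum_lt_sum_of_nonempty
      · exact Finset.nonempty_range_iff.mpr (by omega)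
      · intro i hi
        exact hcon i (Finset.mem_range.mp hi)
    rw [Finset.sum_const, Finset.card_range] at hlt
    have h1 : (N : ℝ) * (1 / 2) < C := lt_of_lt_of_le (by simpa [nsmul_eq_mul] using hlt) (hC k N)
    linarith
  have decay : ∀ t k n, t * N ≤ n → P w k n ≤ C * (1 / 2) ^ t := by
    intro t
    induction t with
    | zero => intro k n _; simpa using Pbound k n
    | succ t ih =>
      intro k n hn
      rw [Nat.succ_mul] at hn
      have hNn : N ≤ n := by omega
      obtain ⟨n0, hn0N, hn0⟩ := window k
      have hsplit : P w k n = P w k n0 * P w (k + n0 + 1) (n - n0 - 1) := by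
        conv_lhs => rw [show n = n0 + (n - n0 - 1) + 1 by omega]
        exact P_split w k n0 (n - n0 - 1)
      have ih' := ih (k + n0 + 1) (n - n0 - 1) (by omega)
      rw [hsplit]
      calc P w k n0 * P w (k + n0 + 1) (n - n0 - 1) ≤ (1 / 2) * (C * (1 / 2) ^ t) := by
            apply mul_le_mul hn0 ih' (P_nonneg w _ _)
            norm_num
        _ = C * (1 / 2) ^ (t + 1) := by ring
  refine ⟨2 * C, (1 / 2 : ℝ) ^ (1 / (N : ℝ)), by linarith, Real.rpow_pos_of_pos (by norm_num) _,
    Real.rpow_lt_one (by norm_num) (by norm_num) (by positivity), fun k n => ?_⟩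
  have ht : n / N * N ≤ n := Nat.div_mul_le_self n N
  have htn : n < (n / N + 1) * N := by
    have h1 := Nat.div_add_mod n N
    have h2 := Nat.mod_lt n hNpos
    calc n = N * (n / N) + n % N := h1.symm
      _ < N * (n / N) + N := by omega
      _ = (n / N + 1) * N := by ring
  calc P w k n ≤ C * (1 / 2) ^ (n / N) := decay (n / N) k n ht
    _ ≤ C * (2 * ((1 / 2 : ℝ) ^ (1 / (N : ℝ))) ^ n) :=
        mul_le_mul_of_nonneg_left (half_pow_le hNpos htn) (by linarith)
    _ = 2 * C * ((1 / 2 : ℝ) ^ (1 / (N : ℝ))) ^ n := by ring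

lemma iii_to_D (h : ∃ C : ℝ, ∀ k : ℕ, ∑ n ∈ Finset.range (k + 1), R w k n ≤ C) : D w := by
  obtain ⟨C0, hC0⟩ := h
  set C := max C0 1 with hCdef
  have hC1 : (1 : ℝ) ≤ C := le_max_right _ _
  have hC : ∀ k, ∑ n ∈ Finset.range (k + 1), R w k n ≤ C := fun k => (hC0 k).trans (le_max_left _ _)
  set N := 2 * ⌈C⌉₊ with hNdef
  have hNpos : 0 < N := by
    have : 0 < ⌈C⌉₊ := Nat.one_le_ceil_iff.mpr (by linarith)
    omega
  have hNC : 2 * C ≤ (N : ℝ) := by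
    have := Nat.le_ceil C
    push_cast [hNdef]
    linarith
  have Rbound : ∀ k n, n ≤ k → R w k n ≤ C := fun k n hn =>
    (Finset.single_le_sum (fun i _ => R_nonneg w k i) (Finset.mem_range.mpr (by omega))).trans (hC k)
  have window : ∀ k, N ≤ k + 1 → ∃ n0, n0 < N ∧ R w k n0 ≤ 1 / 2 := by
    intro k hk
    by_contra hcon
    push_neg at hcon
    have hlt : ∑ n ∈ Finset.range N, (1 / 2 : ℝ) < ∑ n ∈ Finset.range N, R w k n := by
      apply Finset.sum_lt_sum_of_nonempty
      · exact Finset.nonempty_range_iff.mpr (by omega)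
      · intro i hi
        exact hcon i (Finset.mem_range.mp hi)
    rw [Finset.sum_const, Finset.card_range] at hlt
    have hsub : ∑ n ∈ Finset.range N, R w k n ≤ ∑ n ∈ Finset.range (k + 1), R w k n :=
      Finset.sum_le_sum_of_subset_of_nonneg
        (Finset.range_subset_range.mpr hk) (fun i _ _ => R_nonneg w k i)
    have h1 : (N : ℝ) * (1 / 2) < C := lt_of_lt_of_le (by simpa [nsmul_eq_mul] using hlt)
      ((hsub).trans (hC k))
    linarith
  have decay : ∀ t k n, n ≤ k → t * N ≤ n → R w k n ≤ C * (1 / 2) ^ t := by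
    intro t
    induction t with
    | zero => intro k n hnk _; simpa using Rbound k n hnk
    | succ t ih =>
      intro k n hnk hn
      rw [Nat.succ_mul] at hn
      have hNn : N ≤ n := by omega
      obtain ⟨n0, hn0N, hn0⟩ := window k (by omega)
      have hsplit := R_split w k n n0 (by omega)
      have ih' := ih (k - n0 - 1) (n - n0 - 1) (by omega) (by omega)
      rw [hsplit]
      calc R w k n0 * R w (k - n0 - 1) (n - n0 - 1) ≤ (1 / 2) * (C * (1 / 2) ^ t) := by
            apply mul_le_mul hn0 ih' (R_nonneg w _ _)
            norm_num
        _ = C * (1 / 2) ^ (t + 1) := by ring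
  refine ⟨2 * C, (1 / 2 : ℝ) ^ (1 / (N : ℝ)), by linarith, Real.rpow_pos_of_pos (by norm_num) _,
    Real.rpow_lt_one (by norm_num) (by norm_num) (by positivity), fun k n => ?_⟩
  have hPR : P w k n = R w (k + n) n := by
    rw [Q_eq w (k + n) n (by omega), show k + n - n = k by omega]
  have ht : n / N * N ≤ n := Nat.div_mul_le_self n N
  have htn : n < (n / N + 1) * N := by
    have h1 := Nat.div_add_mod n N
    have h2 := Nat.mod_lt n hNpos
    calc n = N * (n / N) + n % N := h1.symm
      _ < N * (n / N) + N := by omega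
      _ = (n / N + 1) * N := by ring
  calc P w k n = R w (k + n) n := hPR
    _ ≤ C * (1 / 2) ^ (n / N) := decay (n / N) (k + n) n (by omega) ht
    _ ≤ C * (2 * ((1 / 2 : ℝ) ^ (1 / (N : ℝ))) ^ n) :=
        mul_le_mul_of_nonneg_left (half_pow_le hNpos htn) (by linarith)
    _ = 2 * C * ((1 / 2 : ℝ) ^ (1 / (N : ℝ))) ^ n := by ring

lemma i_to_D (hw : ∃ C : ℝ, ∀ n, ‖w n‖ ≤ C)
    (h : ∃ L : ℝ, L < 1 ∧ Tendsto (fun n : ℕ => ⨆ k : ℕ, (P w k n) ^ (1 / (n : ℝ)))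
      atTop (nhds L)) : D w := by
  obtain ⟨L, hL1, htend⟩ := h
  obtain ⟨C0, hC0⟩ := hw
  set C1 := max C0 1 with hC1def
  have hC1 : (1 : ℝ) ≤ C1 := le_max_right _ _
  have hwC : ∀ n, ‖w n‖ ≤ C1 := fun n => (hC0 n).trans (le_max_left _ _)
  have Pbd : ∀ k n, P w k n ≤ C1 ^ (n + 1) := by
    intro k n
    calc P w k n ≤ ∏ _i ∈ Finset.range (n + 1), C1 :=
          Finset.prod_le_prod (fun _ _ => norm_nonneg _) (fun i _ => hwC _)
      _ = C1 ^ (n + 1) := by rw [Finset.prod_const, Finset.card_range]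
  have bdd : ∀ n : ℕ, BddAbove (Set.range fun k => (P w k n) ^ (1 / (n : ℝ))) := by
    intro n
    refine ⟨(C1 ^ (n + 1)) ^ (1 / (n : ℝ)), ?_⟩
    rintro x ⟨k, rfl⟩
    exact Real.rpow_le_rpow (P_nonneg w k n) (Pbd k n) (by positivity)
  have hL0 : 0 ≤ L := ge_of_tendsto htend (Eventually.of_forall fun n =>
    iSup_nonneg fun k => Real.rpow_nonneg (P_nonneg w k n) _)
  set c := (L + 1) / 2 with hcdef
  have hc0 : 0 < c := by simp only [hcdef]; linarith
  have hc1 : c < 1 := by simp only [hcdef]; linarith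
  have hev := htend.eventually_lt_const (show L < c by simp only [hcdef]; linarith)
  rw [eventually_atTop] at hev
  obtain ⟨N0, hN0⟩ := hev
  set N1 := max N0 1 with hN1def
  have key : ∀ k n, N1 ≤ n → P w k n ≤ c ^ n := by
    intro k n hn
    have hn1 : 1 ≤ n := le_trans (le_max_right _ _) hn
    have h1 : (P w k n) ^ (1 / (n : ℝ)) < c :=
      lt_of_le_of_lt (le_ciSup (bdd n) k) (hN0 n (le_trans (le_max_left _ _) hn))
    have h2 := Real.rpow_lt_rpow (Real.rpow_nonneg (P_nonneg w k n) _) h1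
      (show (0:ℝ) < (n:ℝ) by exact_mod_cast hn1)
    have hne : (n:ℝ) ≠ 0 := Nat.cast_ne_zero.mpr (by omega)
    rw [← Real.rpow_mul (P_nonneg w k n), one_div, inv_mul_cancel₀ hne, Real.rpow_one,
      Real.rpow_natCast] at h2
    exact h2.le
  set M := C1 ^ N1 / c ^ N1 with hMdef
  have hcN : (0:ℝ) < c ^ N1 := pow_pos hc0 _
  have hM1 : 1 ≤ M := by
    rw [hMdef, le_div_iff₀ hcN, one_mul]
    exact pow_le_pow_left₀ hc0.le (by linarith) N1
  refine ⟨M, c, hM1, hc0, hc1, fun k n => ?_⟩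
  by_cases hn : N1 ≤ n
  · calc P w k n ≤ c ^ n := key k n hn
      _ = 1 * c ^ n := (one_mul _).symm
      _ ≤ M * c ^ n := by
          apply mul_le_mul_of_nonneg_right hM1 (pow_nonneg hc0.le n)
  · push_neg at hn
    have h3 : P w k n ≤ C1 ^ N1 := (Pbd k n).trans (pow_le_pow_right₀ hC1 (by omega))
    have h4 : c ^ N1 ≤ c ^ n := pow_le_pow_of_le_one hc0.le hc1.le (by omega)
    calc P w k n ≤ C1 ^ N1 := h3
      _ = M * c ^ N1 := by rw [hMdef]; field_simp
      _ ≤ M * c ^ n := mul_le_mul_of_nonneg_left h4 (by linarith)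

lemma tendsto_rpow_one_div_add_one {B : ℝ} (hB : 0 < B) :
    Tendsto (fun n : ℕ => B ^ (1 / ((n : ℝ) + 1))) atTop (nhds 1) := by
  have h1 : Tendsto (fun n : ℕ => Real.log B * (1 / ((n : ℝ) + 1))) atTop (nhds 0) := by
    simpa using (tendsto_one_div_add_atTop_nhds_zero_nat).const_mul (Real.log B)
  have h2 := (Real.continuous_exp.tendsto 0).comp h1
  rw [Real.exp_zero] at h2
  exact h2.congr fun n => (Real.rpow_def_of_pos hB _).symm

lemma tendsto_rpow_one_div {B : ℝ} (hB : 0 < B) :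
    Tendsto (fun n : ℕ => B ^ (1 / (n : ℝ))) atTop (nhds 1) := by
  have h1 : Tendsto (fun n : ℕ => Real.log B * (1 / (n : ℝ))) atTop (nhds 0) := by
    simpa using (tendsto_one_div_atTop_nhds_zero_nat).const_mul (Real.log B)
  have h2 := (Real.continuous_exp.tendsto 0).comp h1
  rw [Real.exp_zero] at h2
  exact h2.congr fun n => (Real.rpow_def_of_pos hB _).symm

lemma D_to_i (hD : D w) :
    ∃ L : ℝ, L < 1 ∧ Tendsto (fun n : ℕ => ⨆ k : ℕ, (P w k n) ^ (1 / (n : ℝ)))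
      atTop (nhds L) := by
  obtain ⟨M, c, hM, hc0, hc1, hP⟩ := hD
  have hM0 : (0:ℝ) < M := by linarith
  set g : ℕ → ℝ := fun n => ⨆ k, P w k n with hgdef
  have hPM : ∀ k n, P w k n ≤ M := fun k n =>
    (hP k n).trans (mul_le_of_le_one_right hM0.le (pow_le_one₀ hc0.le hc1.le))
  have bddP : ∀ n, BddAbove (Set.range fun k => P w k n) := fun n =>
    ⟨M, by rintro x ⟨k, rfl⟩; exact hPM k n⟩
  have hg0 : ∀ n, 0 ≤ g n := fun n => iSup_nonneg fun k => P_nonneg w k n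
  have hgle : ∀ n, g n ≤ M * c ^ n := fun n => ciSup_le fun k => hP k n
  have hgM : ∀ n, g n ≤ M := fun n => ciSup_le fun k => hPM k n
  have hgsub : ∀ n m, g (n + m + 1) ≤ g n * g m := by
    intro n m
    apply ciSup_le
    intro k
    rw [P_split]
    exact mul_le_mul (le_ciSup (bddP n) k) (le_ciSup (bddP m) _) (P_nonneg w _ _) (hg0 n)
  have f_eq : ∀ n : ℕ, 1 ≤ n → (⨆ k, (P w k n) ^ (1 / (n:ℝ))) = (g n) ^ (1 / (n:ℝ)) := by
    intro n hn
    have hne : (n:ℝ) ≠ 0 := Nat.cast_ne_zero.mpr (by omega)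
    have hnpos : (0:ℝ) < (n:ℝ) := by exact_mod_cast Nat.pos_of_ne_zero (by omega)
    have h1n : (0:ℝ) ≤ 1/(n:ℝ) := by positivity
    apply le_antisymm
    · apply ciSup_le
      intro k
      exact Real.rpow_le_rpow (P_nonneg w k n) (le_ciSup (bddP n) k) h1n
    · set S := ⨆ k, (P w k n) ^ (1/(n:ℝ)) with hS
      have hS0 : 0 ≤ S := iSup_nonneg fun k => Real.rpow_nonneg (P_nonneg w k n) _
      have bddS : BddAbove (Set.range fun k => (P w k n) ^ (1/(n:ℝ))) := by
        refine ⟨M ^ (1/(n:ℝ)), ?_⟩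
        rintro x ⟨k, rfl⟩
        exact Real.rpow_le_rpow (P_nonneg w k n) (hPM k n) h1n
      have hgS : g n ≤ S ^ (n:ℝ) := by
        apply ciSup_le
        intro k
        have h2 := Real.rpow_le_rpow (Real.rpow_nonneg (P_nonneg w k n) (1/(n:ℝ)))
          (le_ciSup bddS k) hnpos.le
        rwa [← Real.rpow_mul (P_nonneg w k n), one_div_mul_cancel hne,
          Real.rpow_one] at h2
      calc (g n)^(1/(n:ℝ)) ≤ (S ^ (n:ℝ)) ^ (1/(n:ℝ)) := Real.rpow_le_rpow (hg0 n) hgS h1n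
        _ = S := by
            rw [← Real.rpow_mul hS0, mul_one_div, div_self hne, Real.rpow_one]
  by_cases hzero : ∃ m, g m = 0
  · obtain ⟨m, hm⟩ := hzero
    have hz : ∀ n, m < n → g n = 0 := by
      intro n hn
      have h1 : g n ≤ g m * g (n - m - 1) := by
        conv_lhs => rw [show n = m + (n - m - 1) + 1 by omega]
        exact hgsub m (n - m - 1)
      rw [hm, zero_mul] at h1
      exact le_antisymm h1 (hg0 n)
    refine ⟨0, by norm_num, ?_⟩
    apply Tendsto.congr' _ tendsto_const_nhds
    rw [EventuallyEq, eventually_atTop]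
    refine ⟨m + 1, fun n hn => ?_⟩
    rw [f_eq n (by omega), hz n (by omega),
      Real.zero_rpow (one_div_ne_zero (Nat.cast_ne_zero.mpr (by omega)))]
  · push_neg at hzero
    have hgpos : ∀ n, 0 < g n := fun n => lt_of_le_of_ne (hg0 n) (Ne.symm (hzero n))
    set hh : ℕ → ℝ := fun n => (g n) ^ (1 / ((n:ℝ) + 1)) with hhdef
    have hhpos : ∀ n, 0 < hh n := fun n => Real.rpow_pos_of_pos (hgpos n) _
    have hexple : ∀ n : ℕ, 1 / ((n:ℝ) + 1) ≤ 1 := by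
      intro n
      rw [div_le_one (by positivity)]
      linarith [Nat.cast_nonneg (α := ℝ) n]
    have hd_pow : ∀ m : ℕ, (hh m) ^ (m + 1) = g m := by
      intro m
      rw [hhdef]
      simp only
      rw [← Real.rpow_natCast ((g m) ^ (1/((m:ℝ)+1))) (m+1), ← Real.rpow_mul (hg0 m)]
      push_cast
      rw [one_div, inv_mul_cancel₀ (by positivity), Real.rpow_one]
    have bddh : BddBelow (Set.range hh) := ⟨0, by rintro x ⟨n, rfl⟩; exact (hhpos n).le⟩
    set L := ⨅ n, hh n with hLdef
    have hL0 : 0 ≤ L := le_ciInf fun n => (hhpos n).le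
    have hLle : ∀ n, L ≤ hh n := fun n => ciInf_le bddh n
    have hhM : ∀ n, hh n ≤ M := by
      intro n
      calc hh n ≤ M ^ (1/((n:ℝ)+1)) := Real.rpow_le_rpow (hg0 n) (hgM n) (by positivity)
        _ ≤ M ^ (1:ℝ) := Real.rpow_le_rpow_of_exponent_le hM (hexple n)
        _ = M := Real.rpow_one M
    have hL1 : L < 1 := by
      obtain ⟨n, hn⟩ := exists_pow_lt_of_lt_one (show (0:ℝ) < 1/M by positivity) hc1
      have h2 : M * c ^ n < 1 := by
        have h3 := mul_lt_mul_of_pos_left hn hM0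
        rwa [mul_one_div, div_self hM0.ne'] at h3
      have hgn1 : g n < 1 := lt_of_le_of_lt (hgle n) h2
      exact lt_of_le_of_lt (hLle n) (Real.rpow_lt_one (hg0 n) hgn1 (by positivity))
    have Htend : Tendsto hh atTop (nhds L) := by
      rw [Metric.tendsto_atTop]
      intro ε hε
      obtain ⟨m, hm⟩ := exists_lt_of_ciInf_lt (show ⨅ n, hh n < L + ε/2 by
        rw [← hLdef]; linarith)
      set d := hh m with hddef
      have hd0 : 0 < d := hhpos m
      set B := 1 + ∑ r ∈ Finset.range (m+1), g r / d ^ (r+1) with hBdef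
      have hsum0 : 0 ≤ ∑ r ∈ Finset.range (m+1), g r / d ^ (r+1) :=
        Finset.sum_nonneg fun i _ => div_nonneg (hg0 i) (pow_pos hd0 _).le
      have hB1 : 1 ≤ B := by rw [hBdef]; linarith
      have hB0 : 0 < B := by linarith
      have key : ∀ n, g n ≤ d ^ (n+1) * B := by
        intro n
        induction n using Nat.strong_induction_on with
        | _ n ih =>
          by_cases hn : n ≤ m
          · have h1 : g n / d^(n+1) ≤ ∑ r ∈ Finset.range (m+1), g r / d^(r+1) :=
              Finset.single_le_sum (f := fun r => g r / d^(r+1))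
                (fun i _ => div_nonneg (hg0 i) (pow_pos hd0 _).le)
                (a := n) (Finset.mem_range.mpr (by omega))
            rw [div_le_iff₀ (pow_pos hd0 _)] at h1
            calc g n ≤ (∑ r ∈ Finset.range (m+1), g r / d^(r+1)) * d^(n+1) := h1
              _ ≤ B * d^(n+1) :=
                  mul_le_mul_of_nonneg_right (by rw [hBdef]; linarith) (pow_pos hd0 _).le
              _ = d^(n+1) * B := mul_comm _ _
          · push_neg at hn
            have hsplit : g n ≤ g m * g (n - m - 1) := by
              conv_lhs => rw [show n = m + (n - m - 1) + 1 by omega]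
              exact hgsub m (n - m - 1)
            have ih' := ih (n - m - 1) (by omega)
            have hgm : g m = d ^ (m+1) := (hd_pow m).symm
            calc g n ≤ g m * g (n-m-1) := hsplit
              _ ≤ d^(m+1) * (d^(n-m-1+1) * B) := by
                  rw [hgm]
                  exact mul_le_mul_of_nonneg_left ih' (pow_pos hd0 _).le
              _ = d^(n+1) * B := by
                  rw [← mul_assoc, ← pow_add,
                    show m + 1 + (n - m - 1 + 1) = n + 1 from by omega]
      have hub : ∀ n, hh n ≤ d * B ^ (1/((n:ℝ)+1)) := by
        intro n
        have h1 : hh n ≤ (d^(n+1) * B) ^ (1/((n:ℝ)+1)) :=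
          Real.rpow_le_rpow (hg0 n) (key n) (by positivity)
        rw [Real.mul_rpow (pow_pos hd0 _).le hB0.le] at h1
        have h2 : ((d^(n+1):ℝ)) ^ (1/((n:ℝ)+1)) = d := by
          rw [← Real.rpow_natCast d (n+1), ← Real.rpow_mul hd0.le]
          push_cast
          rw [mul_one_div, div_self (by positivity), Real.rpow_one]
        rwa [h2] at h1
      have htendB : Tendsto (fun n : ℕ => d * B ^ (1/((n:ℝ)+1))) atTop (nhds d) := by
        have h3 := (tendsto_rpow_one_div_add_one hB0).const_mul d
        simpa using h3
      have hev := htendB.eventually_lt_const (show d < L + ε by linarith)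
      rw [eventually_atTop] at hev
      obtain ⟨N, hN⟩ := hev
      refine ⟨N, fun n hn => ?_⟩
      rw [Real.dist_eq, abs_of_nonneg (by linarith [hLle n])]
      have h4 := (hub n).trans_lt (hN n hn)
      linarith
    have hfh : ∀ n : ℕ, 1 ≤ n → (g n) ^ (1/(n:ℝ)) = hh n * (hh n) ^ (1/(n:ℝ)) := by
      intro n hn
      have hne : (n:ℝ) ≠ 0 := Nat.cast_ne_zero.mpr (by omega)
      rw [hhdef]
      simp only
      rw [← Real.rpow_mul (hg0 n), ← Real.rpow_add (hgpos n)]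
      congr 1
      field_simp
    rcases eq_or_lt_of_le hL0 with hLz | hLz
    · refine ⟨L, hL1, ?_⟩
      have hup : Tendsto (fun n : ℕ => hh n * M) atTop (nhds L) := by
        have h5 := Htend.mul_const M
        have hLM : L * M = L := by rw [← hLz]; ring
        rwa [hLM] at h5
      apply tendsto_of_tendsto_of_tendsto_of_le_of_le' tendsto_const_nhds hup
      · apply Eventually.of_forall
        intro n
        rw [← hLz]
        exact iSup_nonneg fun k => Real.rpow_nonneg (P_nonneg w k n) _
      · rw [eventually_atTop]
        refine ⟨1, fun n hn => ?_⟩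
        have hn' : (1:ℝ) ≤ (n:ℝ) := by exact_mod_cast hn
        rw [f_eq n hn, hfh n hn]
        apply mul_le_mul_of_nonneg_left _ (hhpos n).le
        calc (hh n)^(1/(n:ℝ)) ≤ M ^ (1/(n:ℝ)) :=
              Real.rpow_le_rpow (hhpos n).le (hhM n) (by positivity)
          _ ≤ M ^ (1:ℝ) := Real.rpow_le_rpow_of_exponent_le hM
              (by rw [div_le_one (by linarith)]; exact hn')
          _ = M := Real.rpow_one M
    · refine ⟨L, hL1, ?_⟩
      have hmid : Tendsto (fun n : ℕ => (hh n) ^ (1/(n:ℝ))) atTop (nhds 1) :=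
        tendsto_of_tendsto_of_tendsto_of_le_of_le' (tendsto_rpow_one_div hLz)
          (tendsto_rpow_one_div hM0)
          (Eventually.of_forall fun n => Real.rpow_le_rpow hL0 (hLle n) (by positivity))
          (Eventually.of_forall fun n => Real.rpow_le_rpow (hhpos n).le (hhM n) (by positivity))
      have h6 := Htend.mul hmid
      rw [mul_one] at h6
      apply h6.congr'
      rw [EventuallyEq, eventually_atTop]
      exact ⟨1, fun n hn => ((f_eq n hn).trans (hfh n hn)).symm⟩

end Stmt11Aux
end
end Stmt11Aux

/-- Equivalent conditions on a bounded sequence of scalars (Lemma on weighted shifts). -/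
theorem stmt11 (w : ℕ → ℂ) (hw : ∃ C : ℝ, ∀ n, ‖w n‖ ≤ C) :
    ((∃ L : ℝ, L < 1 ∧ Tendsto (fun n : ℕ =>
          ⨆ k : ℕ, (∏ i ∈ Finset.range (n + 1), ‖w (k + i)‖) ^ (1 / (n : ℝ)))
        atTop (nhds L)) ↔
      (∃ C : ℝ, ∀ k m : ℕ,
          ∑ n ∈ Finset.range m, ∏ i ∈ Finset.range (n + 1), ‖w (k + i)‖ ≤ C)) ∧
    ((∃ C : ℝ, ∀ k m : ℕ,
          ∑ n ∈ Finset.range m, ∏ i ∈ Finset.range (n + 1), ‖w (k + i)‖ ≤ C) ↔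
      (∃ C : ℝ, ∀ k : ℕ,
          ∑ n ∈ Finset.range (k + 1), ∏ i ∈ Finset.range (n + 1), ‖w (k - i)‖ ≤ C)) := by
  exact ⟨⟨fun h => Stmt11Aux.D_to_ii w (Stmt11Aux.i_to_D w hw h),
          fun h => Stmt11Aux.D_to_i w (Stmt11Aux.ii_to_D w h)⟩,
         ⟨fun h => Stmt11Aux.D_to_iii w (Stmt11Aux.ii_to_D w h),
          fun h => Stmt11Aux.D_to_ii w (Stmt11Aux.iii_to_D w h)⟩⟩
end

section
/- Let T be an invertible continuous linear operator on a Banach space X with a direct sum decomposition X = M ⊕ N into closed subspaces with T(M) ⊆ M and T^{-1}(N) ⊆ N, such that ‖T y‖ ≥ 2‖y‖ for all y ∈ M and ‖T^{-1} z‖ ≥ 2‖z‖ for all z ∈ N, and suppose there is c > 0 such that the projections onto T^k(M) along T^k(N) and onto T^k(N) along T^k(M) are bounded by c uniformly in k ∈ ℤ. Then every periodic δ-pseudotrajectory (x_j)_{j∈ℤ} of T with δ := ε/(12c) satisfies ‖x_j‖ < ε for all j; in particular T has the periodic shadowing property. -/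
/-!
Split each point of a pseudotrajectory along the splitting at its own time: `x j = a j + b j` with
`a j ∈ T^j M` and `b j ∈ T^j N`. Because `T` carries the splitting at time `j` to the one at time
`j + 1`, the uniform bound `c` on the projections makes `a` and `b` themselves
`cδ`-pseudotrajectories. Along the forward orbit `a` lies in `M`, where `T` doubles norms, so a
bounded `a` must start within `cδ` of `0`; along the backward orbit `b` lies in `N`, where `T⁻¹`
doubles norms, which gives `‖b 0‖ ≤ 2cδ`. Periodic pseudotrajectories are bounded, hence
`‖x j‖ ≤ 3cδ` for all `j`, and the zero orbit shadows them.
-/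

open Set Filter

theorem Function.Periodic.finite_range {α : Type*} {f : ℤ → α} {p : ℤ}
    (h : Function.Periodic f p) (hp : 0 < p) : (range f).Finite := by
  refine ((finite_Ico 0 p).image f).subset ?_
  rintro _ ⟨j, rfl⟩
  obtain ⟨i, hi, hji⟩ := h.exists_mem_Ico₀ hp j
  exact ⟨i, hi, hji.symm⟩

theorem le_of_bddAbove_of_mul_sub_le_succ {u : ℕ → ℝ} {r K : ℝ} (hr : 1 < r)
    (hu : BddAbove (range u)) (hstep : ∀ n, r * u n - K ≤ u (n + 1)) :
    (r - 1) * u 0 ≤ K := by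
  set w : ℕ → ℝ := fun n => (r - 1) * u n - K
  have hgeom : ∀ n, r ^ n * w 0 ≤ w n := by
    intro n
    induction n with
    | zero => simp
    | succ n ih =>
      have hw : r * w n ≤ w (n + 1) := by
        nlinarith [mul_le_mul_of_nonneg_left (hstep n) (sub_nonneg.2 hr.le)]
      calc r ^ (n + 1) * w 0 = r * (r ^ n * w 0) := by ring
        _ ≤ r * w n := by gcongr
        _ ≤ w (n + 1) := hw
  by_contra! h
  have hw : Tendsto w atTop atTop := tendsto_atTop_mono hgeom
    ((tendsto_pow_atTop_atTop_of_one_lt hr).atTop_mul_const (sub_pos.2 h))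
  obtain ⟨C, hC⟩ := hu
  refine not_bddAbove_of_tendsto_atTop hw ⟨(r - 1) * C - K, ?_⟩
  rintro _ ⟨n, rfl⟩
  have := mul_le_mul_of_nonneg_left (hC ⟨n, rfl⟩) (sub_nonneg.2 hr.le)
  simp only [w]
  linarith

theorem sub_mem_image {G H F S : Type*} [AddGroup G] [AddGroup H] [FunLike F G H]
    [AddMonoidHomClass F G H] [SetLike S G] [AddSubgroupClass S G] (f : F) {W : S} {u v : H}
    (hu : u ∈ f '' W) (hv : v ∈ f '' W) : u - v ∈ f '' W := by
  obtain ⟨a, ha, rfl⟩ := hu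
  obtain ⟨b, hb, rfl⟩ := hv
  exact ⟨a - b, sub_mem ha hb, map_sub f a b⟩

namespace ContinuousLinearEquiv

variable {R M : Type*} [Semiring R] [TopologicalSpace M] [AddCommMonoid M] [Module R M]
  {e : M ≃L[R] M} {s : Set M}

theorem mapsTo_pow (h : MapsTo e s s) (n : ℕ) : MapsTo ⇑(e ^ n) s s := by
  induction n with
  | zero => exact mapsTo_id s
  | succ n ih => rw [pow_succ]; exact ih.comp h

theorem image_zpow_subset_of_nonneg (h : MapsTo e s s) {k : ℤ} (hk : 0 ≤ k) :
    ⇑(e ^ k) '' s ⊆ s := by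
  lift k to ℕ using hk
  rw [zpow_natCast]
  exact (mapsTo_pow h k).image_subset

theorem image_zpow_subset_of_nonpos (h : MapsTo e.symm s s) {k : ℤ} (hk : k ≤ 0) :
    ⇑(e ^ k) '' s ⊆ s := by
  obtain ⟨n, rfl⟩ : ∃ n : ℕ, k = -n := ⟨(-k).toNat, by omega⟩
  rw [zpow_neg, zpow_natCast, ← inv_pow]
  exact (mapsTo_pow (e := e⁻¹) h n).image_subset

theorem apply_mem_image_zpow_add_one {k : ℤ} {x : M} (hx : x ∈ ⇑(e ^ k) '' s) :
    e x ∈ ⇑(e ^ (k + 1)) '' s := by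
  obtain ⟨y, hy, rfl⟩ := hx
  exact ⟨y, hy, by rw [add_comm, zpow_add, zpow_one]; rfl⟩

end ContinuousLinearEquiv

section Expanding

variable {X : Type*} [SeminormedAddCommGroup X] {f : X → X} {s : Set X} {r K : ℝ}

theorem norm_le_of_expanding_forward (hr : 1 < r) (hf : ∀ y ∈ s, r * ‖y‖ ≤ ‖f y‖)
    {a : ℕ → X} (ha : ∀ n, a n ∈ s) (hbdd : BddAbove (range fun n => ‖a n‖))
    (hstep : ∀ n, ‖a (n + 1) - f (a n)‖ ≤ K) : (r - 1) * ‖a 0‖ ≤ K := by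
  refine le_of_bddAbove_of_mul_sub_le_succ (u := fun n => ‖a n‖) hr hbdd fun n => ?_
  have htri := norm_sub_norm_le (f (a n)) (a (n + 1))
  rw [norm_sub_rev] at htri
  linarith [hf _ (ha n), hstep n]

theorem norm_le_of_expanding_backward (hr : 1 < r) (hf : ∀ y, f y ∈ s → r * ‖f y‖ ≤ ‖y‖)
    {b : ℕ → X} (hb : ∀ n, f (b (n + 1)) ∈ s) (hbdd : BddAbove (range fun n => ‖b n‖))
    (hstep : ∀ n, ‖b n - f (b (n + 1))‖ ≤ K) : (r - 1) * ‖b 0‖ ≤ r * K := by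
  refine le_of_bddAbove_of_mul_sub_le_succ (u := fun n => ‖b n‖) hr hbdd fun n => ?_
  have htri := (norm_sub_norm_le (b n) (f (b (n + 1)))).trans (hstep n)
  nlinarith [hf _ (hb n)]

end Expanding

section Splitting

variable {𝕜 X : Type*} [Ring 𝕜] [SeminormedAddCommGroup X] [Module 𝕜 X] {T : X ≃L[𝕜] X}
  {M N : Submodule 𝕜 X} {c : ℝ}

theorem norm_sub_apply_components_le
    (hbound : ∀ (k : ℤ) (x a b : X), a ∈ ⇑(T ^ k) '' (M : Set X) →
        b ∈ ⇑(T ^ k) '' (N : Set X) → x = a + b → ‖a‖ ≤ c * ‖x‖ ∧ ‖b‖ ≤ c * ‖x‖)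
    {k : ℤ} {x a b x' a' b' : X} (ha : a ∈ ⇑(T ^ k) '' (M : Set X))
    (hb : b ∈ ⇑(T ^ k) '' (N : Set X)) (hx : x = a + b) (ha' : a' ∈ ⇑(T ^ (k + 1)) '' (M : Set X))
    (hb' : b' ∈ ⇑(T ^ (k + 1)) '' (N : Set X)) (hx' : x' = a' + b') :
    ‖a' - T a‖ ≤ c * ‖x' - T x‖ ∧ ‖b' - T b‖ ≤ c * ‖x' - T x‖ :=
  hbound (k + 1) _ _ _ (sub_mem_image _ ha' (T.apply_mem_image_zpow_add_one ha))
    (sub_mem_image _ hb' (T.apply_mem_image_zpow_add_one hb)) (by rw [hx, hx', map_add]; abel)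

theorem norm_le_of_bddAbove_pseudotrajectory {r δ : ℝ} (hr : 1 < r) (hc : 0 ≤ c)
    (hTM : MapsTo T M M) (hTN : MapsTo T.symm N N)
    (hexpM : ∀ y ∈ M, r * ‖y‖ ≤ ‖T y‖) (hexpN : ∀ z ∈ N, r * ‖z‖ ≤ ‖T.symm z‖)
    (hdec : ∀ (k : ℤ) (x : X),
        ∃ a ∈ ⇑(T ^ k) '' (M : Set X), ∃ b ∈ ⇑(T ^ k) '' (N : Set X), x = a + b)
    (hbound : ∀ (k : ℤ) (x a b : X), a ∈ ⇑(T ^ k) '' (M : Set X) →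
        b ∈ ⇑(T ^ k) '' (N : Set X) → x = a + b → ‖a‖ ≤ c * ‖x‖ ∧ ‖b‖ ≤ c * ‖x‖)
    {x : ℤ → X} (hbdd : BddAbove (range fun j => ‖x j‖))
    (hx : ∀ j, ‖T (x j) - x (j + 1)‖ ≤ δ) :
    (r - 1) * ‖x 0‖ ≤ (r + 1) * c * δ := by
  choose a ha b hb hab using fun j => hdec j (x j)
  obtain ⟨S, hS⟩ := hbdd
  have hcomp : ∀ j, ‖a j‖ ≤ c * S ∧ ‖b j‖ ≤ c * S := fun j =>
    have hxS : c * ‖x j‖ ≤ c * S := mul_le_mul_of_nonneg_left (hS ⟨j, rfl⟩) hc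
    (hbound j _ _ _ (ha j) (hb j) (hab j)).imp hxS.trans' hxS.trans'
  have hstep : ∀ j, ‖a (j + 1) - T (a j)‖ ≤ c * δ ∧ ‖b (j + 1) - T (b j)‖ ≤ c * δ := fun j =>
    have hxδ : c * ‖x (j + 1) - T (x j)‖ ≤ c * δ :=
      mul_le_mul_of_nonneg_left ((norm_sub_rev _ _).trans_le (hx j)) hc
    (norm_sub_apply_components_le hbound (ha j) (hb j) (hab j) (ha (j + 1)) (hb (j + 1))
      (hab (j + 1))).imp hxδ.trans' hxδ.trans'
  have hfwd : (r - 1) * ‖a 0‖ ≤ c * δ := by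
    refine norm_le_of_expanding_forward (a := fun n : ℕ => a n) hr hexpM
      (fun n => T.image_zpow_subset_of_nonneg hTM n.cast_nonneg (ha n))
      ⟨c * S, by rintro _ ⟨n, rfl⟩; exact (hcomp n).1⟩ fun n => ?_
    simpa only [Nat.cast_succ] using (hstep n).1
  have hbwd : (r - 1) * ‖b 0‖ ≤ r * (c * δ) := by
    refine norm_le_of_expanding_backward (b := fun n : ℕ => b (-n)) (s := N) hr
      (fun y hy => by simpa using hexpN _ hy)
      (fun n => T.image_zpow_subset_of_nonpos hTN (by omega)
        (T.apply_mem_image_zpow_add_one (hb (-(n + 1 : ℕ)))))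
      ⟨c * S, by rintro _ ⟨n, rfl⟩; exact (hcomp _).2⟩ fun n => ?_
    have h := (hstep (-(n + 1 : ℕ))).2
    rwa [show -((n + 1 : ℕ) : ℤ) + 1 = -n by push_cast; ring] at h
  have hsplit : ‖x 0‖ ≤ ‖a 0‖ + ‖b 0‖ := (hab 0).symm ▸ norm_add_le _ _
  nlinarith

end Splitting

theorem stmt12_general {𝕜 X : Type*} [NontriviallyNormedField 𝕜] [NormedAddCommGroup X]
    [NormedSpace 𝕜 X]
    (T : X ≃L[𝕜] X) (M N : Submodule 𝕜 X)
    (hTM : ∀ x ∈ M, T x ∈ M) (hTN : ∀ x ∈ N, T.symm x ∈ N)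
    (hexpM : ∀ y ∈ M, 2 * ‖y‖ ≤ ‖T y‖) (hexpN : ∀ z ∈ N, 2 * ‖z‖ ≤ ‖T.symm z‖)
    (c : ℝ) (hc : 0 < c)
    (hdec : ∀ (k : ℤ) (x : X), ∃! ab : X × X,
        ab.1 ∈ ⇑(T ^ k) '' (M : Set X) ∧ ab.2 ∈ ⇑(T ^ k) '' (N : Set X) ∧ x = ab.1 + ab.2)
    (hbound : ∀ (k : ℤ) (x a b : X), a ∈ ⇑(T ^ k) '' (M : Set X) →
        b ∈ ⇑(T ^ k) '' (N : Set X) → x = a + b → ‖a‖ ≤ c * ‖x‖ ∧ ‖b‖ ≤ c * ‖x‖) :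
    (∀ ε > (0 : ℝ), ∀ x : ℤ → X,
        (∀ j : ℤ, ‖T (x j) - x (j + 1)‖ ≤ ε / (12 * c)) →
        (∃ p : ℕ, 0 < p ∧ ∀ j : ℤ, x (j + p) = x j) →
        ∀ j : ℤ, ‖x j‖ < ε) ∧
    (∀ ε > (0 : ℝ), ∃ δ > (0 : ℝ), ∀ x : ℤ → X,
        (∀ j : ℤ, ‖T (x j) - x (j + 1)‖ ≤ δ) →
        (∃ p : ℕ, 0 < p ∧ ∀ j : ℤ, x (j + p) = x j) →
        ∃ (y : X) (p : ℕ), 0 < p ∧ (∀ j : ℤ, x (j + p) = x j) ∧ (⇑T)^[p] y = y ∧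
          ∀ j : ℤ, ‖x j - (T ^ j) y‖ < ε) := by
  have hdec' : ∀ (k : ℤ) (x : X),
      ∃ a ∈ ⇑(T ^ k) '' (M : Set X), ∃ b ∈ ⇑(T ^ k) '' (N : Set X), x = a + b := fun k x =>
    let ⟨ab, ⟨ha, hb, hx⟩, _⟩ := hdec k x
    ⟨ab.1, ha, ab.2, hb, hx⟩
  have hsmall : ∀ ε > (0 : ℝ), ∀ x : ℤ → X,
      (∀ j : ℤ, ‖T (x j) - x (j + 1)‖ ≤ ε / (12 * c)) →
      (∃ p : ℕ, 0 < p ∧ ∀ j : ℤ, x (j + p) = x j) → ∀ j : ℤ, ‖x j‖ < ε := by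
    rintro ε hε x hx ⟨p, hp, hper⟩ j
    have hbdd : BddAbove (range fun i => ‖x (i + j)‖) :=
      ((Function.Periodic.comp (f := x) hper norm).finite_range (by omega)).bddAbove.mono
        (by rintro _ ⟨i, rfl⟩; exact ⟨i + j, rfl⟩)
    have h := norm_le_of_bddAbove_pseudotrajectory one_lt_two hc.le (fun _ h => hTM _ h)
      (fun _ h => hTN _ h) hexpM hexpN hdec' hbound hbdd
      (fun i => by simpa only [add_right_comm] using hx (i + j))
    have hδ : (2 + 1) * c * (ε / (12 * c)) = ε / 4 := by field_simp; norm_num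
    simp only [zero_add] at h
    linarith
  refine ⟨hsmall, fun ε hε => ⟨ε / (12 * c), by positivity, fun x hx hper => ?_⟩⟩
  obtain ⟨p, hp, hperx⟩ := hper
  refine ⟨0, p, hp, hperx, Function.iterate_fixed (map_zero T) p, fun j => ?_⟩
  simpa using hsmall ε hε x hx ⟨p, hp, hperx⟩ j

/-- Uniformly positively expansive splitting implies that periodic pseudotrajectories stay
near 0; in particular such operators have the periodic shadowing property. -/
theorem stmt12 {𝕜 X : Type*} [NontriviallyNormedField 𝕜] [NormedAddCommGroup X]
    [NormedSpace 𝕜 X] [CompleteSpace X]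
    (T : X ≃L[𝕜] X) (M N : Submodule 𝕜 X)
    (hMc : IsClosed (M : Set X)) (hNc : IsClosed (N : Set X)) (hcompl : IsCompl M N)
    (hTM : ∀ x ∈ M, T x ∈ M) (hTN : ∀ x ∈ N, T.symm x ∈ N)
    (hexpM : ∀ y ∈ M, 2 * ‖y‖ ≤ ‖T y‖) (hexpN : ∀ z ∈ N, 2 * ‖z‖ ≤ ‖T.symm z‖)
    (c : ℝ) (hc : 0 < c)
    (hdec : ∀ (k : ℤ) (x : X), ∃! ab : X × X,
        ab.1 ∈ ⇑(T ^ k) '' (M : Set X) ∧ ab.2 ∈ ⇑(T ^ k) '' (N : Set X) ∧ x = ab.1 + ab.2)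
    (hbound : ∀ (k : ℤ) (x a b : X), a ∈ ⇑(T ^ k) '' (M : Set X) →
        b ∈ ⇑(T ^ k) '' (N : Set X) → x = a + b → ‖a‖ ≤ c * ‖x‖ ∧ ‖b‖ ≤ c * ‖x‖) :
    (∀ ε > (0 : ℝ), ∀ x : ℤ → X,
        (∀ j : ℤ, ‖T (x j) - x (j + 1)‖ ≤ ε / (12 * c)) →
        (∃ p : ℕ, 0 < p ∧ ∀ j : ℤ, x (j + p) = x j) →
        ∀ j : ℤ, ‖x j‖ < ε) ∧
    (∀ ε > (0 : ℝ), ∃ δ > (0 : ℝ), ∀ x : ℤ → X,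
        (∀ j : ℤ, ‖T (x j) - x (j + 1)‖ ≤ δ) →
        (∃ p : ℕ, 0 < p ∧ ∀ j : ℤ, x (j + p) = x j) →
        ∃ (y : X) (p : ℕ), 0 < p ∧ (∀ j : ℤ, x (j + p) = x j) ∧ (⇑T)^[p] y = y ∧
          ∀ j : ℤ, ‖x j - (T ^ j) y‖ < ε) :=
  stmt12_general T M N hTM hTN hexpM hexpN c hc hdec hbound
end

section
/- Let X be a normed space and T a continuous linear operator with ‖Tx‖ ≤ λ‖x‖ for all x and some λ ∈ (0,1). Then CR(T) = {0}; in particular, a proper contraction on a nonzero normed space is not chain recurrent. The same conclusion holds if T is invertible and ‖Tx‖ ≥ λ‖x‖ for all x with some λ > 1. -/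
/-!
Along a δ-chain of a map with `‖T a‖ ≤ l‖a‖`, `l < 1`, the norms satisfy
`‖c (j+1)‖ ≤ l‖c j‖ + δ`, so a chain returning to `x` forces `(1 - l)²‖x‖ ≤ δ`; letting
`δ → 0` gives `x = 0`. For an invertible dilation, a δ-chain of `T` read backwards is a
δ-chain of the contraction `T⁻¹`, which reduces to the first case.
-/

/-- A δ-chain (of positive length) for a map T from x to y in a normed space. -/
def IsDeltaChain {X : Type*} [NormedAddCommGroup X] (T : X → X) (δ : ℝ) (x y : X) : Prop :=
  ∃ (k : ℕ) (c : ℕ → X), 1 ≤ k ∧ c 0 = x ∧ c k = y ∧ ∀ j < k, ‖T (c j) - c (j + 1)‖ ≤ δ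

namespace IsDeltaChain

variable {X : Type*} [NormedAddCommGroup X] {T S : X → X} {δ : ℝ} {x y : X}

lemma of_isFixedPt (hx : Function.IsFixedPt T x) (hδ : 0 ≤ δ) : IsDeltaChain T δ x x :=
  ⟨1, fun _ ↦ x, le_rfl, rfl, rfl, fun _ _ ↦ by simpa [hx.eq] using hδ⟩

lemma reverse (hS : LipschitzWith 1 S) (hST : Function.LeftInverse S T)
    (h : IsDeltaChain T δ x y) : IsDeltaChain S δ y x := by
  obtain ⟨k, c, hk, hc0, hck, hc⟩ := h
  refine ⟨k, fun j ↦ c (k - j), hk, by simpa using hck, by simpa using hc0, fun j hj ↦ ?_⟩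
  obtain ⟨i, rfl⟩ : ∃ i, k = i + j + 1 := ⟨k - j - 1, by omega⟩
  have hS_step : ‖S (c (i + 1)) - S (T (c i))‖ ≤ ‖T (c i) - c (i + 1)‖ := by
    simpa [dist_eq_norm, norm_sub_rev (c (i + 1))] using hS.dist_le_mul (c (i + 1)) (T (c i))
  beta_reduce
  rw [show i + j + 1 - j = i + 1 by omega, show i + j + 1 - (j + 1) = i by omega, ← hST (c i)]
  exact hS_step.trans (hc i (by omega))

section Contraction

variable {l : ℝ} (hl0 : 0 ≤ l) (hl1 : l < 1) (hT : ∀ a, ‖T a‖ ≤ l * ‖a‖)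
include hl0 hl1 hT

lemma norm_le (h : IsDeltaChain T δ x y) : ‖y‖ ≤ l * ‖x‖ + δ / (1 - l) := by
  obtain ⟨k, c, hk, rfl, rfl, hc⟩ := h
  have hδ : 0 ≤ δ := (norm_nonneg _).trans (hc 0 hk)
  have hl : 0 < 1 - l := by linarith
  have hbound : ∀ j ≤ k, ‖c j‖ ≤ l ^ j * ‖c 0‖ + δ / (1 - l) := by
    intro j hj
    induction j with
    | zero => simp only [pow_zero, one_mul, le_add_iff_nonneg_right]; positivity
    | succ n ih =>
      calc ‖c (n + 1)‖ ≤ ‖T (c n)‖ + ‖T (c n) - c (n + 1)‖ := by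
            simpa only [norm_sub_rev] using norm_le_norm_add_norm_sub' (c (n + 1)) (T (c n))
        _ ≤ l * (l ^ n * ‖c 0‖ + δ / (1 - l)) + δ := by
            gcongr
            · exact (hT _).trans (by gcongr; exact ih (by omega))
            · exact hc n (by omega)
        _ = l ^ (n + 1) * ‖c 0‖ + δ / (1 - l) := by field_simp; ring
  calc ‖c k‖ ≤ l ^ k * ‖c 0‖ + δ / (1 - l) := hbound k le_rfl
    _ ≤ l * ‖c 0‖ + δ / (1 - l) := by gcongr; exact pow_le_of_le_one hl0 hl1.le (by omega)

lemma eq_zero_of_forall_pos (hx : ∀ δ > 0, IsDeltaChain T δ x x) : x = 0 := by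
  have hl : 0 < 1 - l := by linarith
  suffices (1 - l) ^ 2 * ‖x‖ ≤ 0 by
    rw [← norm_le_zero_iff]; exact nonpos_of_mul_nonpos_right this (by positivity)
  refine le_of_forall_pos_le_add fun δ hδ ↦ ?_
  have hchain := (hx δ hδ).norm_le hl0 hl1 hT
  have : (1 - l) * ‖x‖ ≤ δ / (1 - l) := by linarith
  rw [le_div_iff₀ hl] at this
  linarith

end Contraction

end IsDeltaChain

/-- A proper contraction (or an invertible proper dilation) on a normed space has trivial
chain recurrent set. -/
theorem stmt16 {𝕜 X : Type*} [NontriviallyNormedField 𝕜] [NormedAddCommGroup X]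
    [NormedSpace 𝕜 X] (T : X →L[𝕜] X)
    (h : (∃ l : ℝ, 0 < l ∧ l < 1 ∧ ∀ x : X, ‖T x‖ ≤ l * ‖x‖) ∨
         ((∃ S : X →L[𝕜] X, (∀ x, S (T x) = x) ∧ ∀ x, T (S x) = x) ∧
          ∃ l : ℝ, 1 < l ∧ ∀ x : X, l * ‖x‖ ≤ ‖T x‖)) :
    {x : X | ∀ δ > (0 : ℝ), IsDeltaChain (⇑T) δ x x} = {0} := by
  refine Set.eq_singleton_iff_unique_mem.2
    ⟨fun δ hδ ↦ .of_isFixedPt (map_zero T) hδ.le, fun x hx ↦ ?_⟩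
  rcases h with ⟨l, hl0, hl1, hT⟩ | ⟨⟨S, hST, hTS⟩, l, hl1, hT⟩
  · exact IsDeltaChain.eq_zero_of_forall_pos hl0.le hl1 hT hx
  · have hS : ∀ a, ‖S a‖ ≤ l⁻¹ * ‖a‖ := fun a ↦ by
      rw [inv_mul_eq_div, le_div_iff₀ (by linarith), mul_comm]
      simpa only [hTS] using hT (S a)
    have hl_inv : l⁻¹ < 1 := inv_lt_one_of_one_lt₀ hl1
    have hS_lip : LipschitzWith 1 S :=
      (AddMonoidHomClass.lipschitz_of_bound S _ hS).weaken (by simpa using hl_inv.le)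
    exact IsDeltaChain.eq_zero_of_forall_pos (by positivity) hl_inv hS
      fun δ hδ ↦ (hx δ hδ).reverse hS_lip hST
end

section
/- For any continuous linear operator T on a topological vector space X and any n ∈ ℕ, the chain recurrent sets of T and T^n coincide: CR(T^n) = CR(T). Consequently T is chain recurrent if and only if T^n is chain recurrent for some (equivalently, every) n ∈ ℕ. -/
/-- A V-chain of length k for a map T from x to y. -/
def IsVChain {X : Type*} [AddCommGroup X] (T : X → X) (V : Set X) (x y : X) (k : ℕ) : Prop :=
  ∃ c : ℕ → X, c 0 = x ∧ c k = y ∧ ∀ j < k, T (c j) - c (j + 1) ∈ V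

/-- The chain recurrent set of a map on a topological vector space. -/
def CRSet (𝕜 : Type*) {X : Type*} [NontriviallyNormedField 𝕜] [AddCommGroup X] [Module 𝕜 X]
    [TopologicalSpace X] (T : X → X) : Set X :=
  {x | ∀ V ∈ nhds (0 : X), Balanced 𝕜 V → ∃ k : ℕ, 1 ≤ k ∧ IsVChain T V x x k}

/-! A `V`-chain for `T^n` becomes a `V`-chain for `T` once the exact orbit segments
`a, T a, …, T^(n-1) a` are inserted between consecutive points, so `CR(T^n) ⊆ CR(T)`.
Conversely, continuity of `T` at `0` gives, for every `V`, a `U` such that `n` consecutive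
`U`-steps of `T` add up to one `V`-step of `T^n`; running a `U`-chain from `x` to `x` for `T`
`n` times and cutting it into blocks of length `n` gives a `V`-chain for `T^n`. -/

open Topology

section Chains

variable {X : Type*} [AddCommGroup X] {f : X → X} {U V : Set X} {x y : X} {k l n : ℕ}

theorem isVChain_zero_iff : IsVChain f V x y 0 ↔ x = y :=
  ⟨fun ⟨c, hc0, hc, _⟩ => hc0.symm.trans hc, fun h => ⟨fun _ => x, rfl, h, by simp⟩⟩

theorem isVChain_one_iff : IsVChain f V x y 1 ↔ f x - y ∈ V := by
  refine ⟨fun ⟨c, hc0, hc1, hc⟩ => hc0 ▸ hc1 ▸ hc 0 one_pos, fun h => ?_⟩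
  exact ⟨fun j => if j = 0 then x else y, rfl, rfl, fun j hj => by simpa [Nat.lt_one_iff.mp hj]⟩

theorem isVChain_add_iff :
    IsVChain f V x y (k + l) ↔ ∃ z, IsVChain f V x z k ∧ IsVChain f V z y l := by
  constructor
  · rintro ⟨c, hc0, hcy, hc⟩
    exact ⟨c k, ⟨c, hc0, rfl, fun j hj => hc j (by omega)⟩,
      ⟨fun j => c (k + j), rfl, hcy, fun j hj => hc (k + j) (by omega)⟩⟩
  · rintro ⟨z, ⟨c, hc0, hcz, hc⟩, ⟨d, hd0, hdy, hd⟩⟩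
    refine ⟨fun j => if j ≤ k then c j else d (j - k), by simp [hc0], ?_, fun j hj => ?_⟩
    · rcases l.eq_zero_or_pos with rfl | hl
      · simp [hcz, hdy.symm.trans hd0]
      · simp [show ¬k + l ≤ k by omega, hdy]
    · rcases lt_trichotomy j k with hjk | rfl | hjk
      · simpa [hjk.le, Nat.succ_le_of_lt hjk] using hc j hjk
      · simpa [hcz, ← hd0] using hd 0 (by omega)
      · simpa [show ¬j ≤ k by omega, show ¬j < k by omega, show j + 1 - k = j - k + 1 by omega]
          using hd (j - k) (by omega)

theorem isVChain_succ_iff :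
    IsVChain f V x y (k + 1) ↔ ∃ z, IsVChain f V x z k ∧ f z - y ∈ V := by
  simp only [isVChain_add_iff, isVChain_one_iff]

theorem IsVChain.trans {z : X} (hxy : IsVChain f V x y k) (hyz : IsVChain f V y z l) :
    IsVChain f V x z (k + l) :=
  isVChain_add_iff.mpr ⟨y, hxy, hyz⟩

theorem IsVChain.mono (h : IsVChain f U x y k) (hUV : U ⊆ V) : IsVChain f V x y k :=
  let ⟨c, hc0, hck, hc⟩ := h
  ⟨c, hc0, hck, fun j hj => hUV (hc j hj)⟩

theorem IsVChain.mul_left (h : IsVChain f V x x k) : ∀ r : ℕ, IsVChain f V x x (r * k)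
  | 0 => by simpa using isVChain_zero_iff.mpr rfl
  | r + 1 => by simpa [Nat.succ_mul] using (h.mul_left r).trans h

theorem isVChain_iterate (h0 : (0 : X) ∈ V) : ∀ m : ℕ, IsVChain f V x (f^[m] x) m
  | 0 => isVChain_zero_iff.mpr rfl
  | m + 1 => isVChain_succ_iff.mpr
      ⟨f^[m] x, isVChain_iterate h0 m, by simpa [Function.iterate_succ_apply'] using h0⟩

theorem IsVChain.of_iterate (h0 : (0 : X) ∈ V) (hn : 0 < n) (h : IsVChain f^[n] V x y k) :
    IsVChain f V x y (n * k) := by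
  obtain ⟨m, rfl⟩ := Nat.exists_eq_succ_of_ne_zero hn.ne'
  induction k generalizing y with
  | zero => exact isVChain_zero_iff.mpr (isVChain_zero_iff.mp h)
  | succ k ih =>
    obtain ⟨z, hxz, hzy⟩ := isVChain_succ_iff.mp h
    refine (ih hxz).trans (isVChain_succ_iff.mpr ⟨f^[m] z, isVChain_iterate h0 m, ?_⟩)
    rwa [← Function.iterate_succ_apply' f]

theorem IsVChain.iterate_of_mul (hU : ∀ a b, IsVChain f U a b n → f^[n] a - b ∈ V) :
    ∀ {y : X} {k : ℕ}, IsVChain f U x y (k * n) → IsVChain f^[n] V x y k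
  | y, 0, h => isVChain_zero_iff.mpr (isVChain_zero_iff.mp (by rwa [Nat.zero_mul] at h))
  | y, k + 1, h => by
    obtain ⟨z, hxz, hzy⟩ := isVChain_add_iff.mp (by rwa [Nat.succ_mul] at h)
    exact isVChain_succ_iff.mpr ⟨z, hxz.iterate_of_mul hU, hU z y hzy⟩

end Chains

section Continuity

variable {X : Type*} [AddCommGroup X] [TopologicalSpace X] [IsTopologicalAddGroup X]

theorem exists_nhds_zero_isVChain_iterate_sub_mem (f : X →+ X) (hf : Continuous f) (n : ℕ) :
    ∀ V ∈ 𝓝 (0 : X), ∃ U ∈ 𝓝 (0 : X), ∀ a b, IsVChain f U a b n → f^[n] a - b ∈ V := by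
  induction n with
  | zero =>
    exact fun V hV =>
      ⟨V, hV, fun a b h => by simpa [isVChain_zero_iff.mp h] using mem_of_mem_nhds hV⟩
  | succ n ih =>
    intro V hV
    obtain ⟨W, hW, hWW⟩ := exists_nhds_zero_half hV
    have hfW : f ⁻¹' W ∈ 𝓝 (0 : X) := hf.continuousAt.preimage_mem_nhds (by rwa [map_zero])
    obtain ⟨U, hU, hUW⟩ := ih _ hfW
    refine ⟨U ∩ W, Filter.inter_mem hU hW, fun a b h => ?_⟩
    obtain ⟨z, haz, hzb⟩ := isVChain_succ_iff.mp h
    have hsplit : f^[n + 1] a - b = f (f^[n] a - z) + (f z - b) := by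
      rw [map_sub, Function.iterate_succ_apply']; abel
    rw [hsplit]
    exact hWW _ (hUW a z (haz.mono Set.inter_subset_left)) _ hzb.2

end Continuity

section ChainRecurrence

variable {𝕜 X : Type*} [NontriviallyNormedField 𝕜] [AddCommGroup X] [Module 𝕜 X]
  [TopologicalSpace X]

theorem crSet_iterate_subset (f : X → X) {n : ℕ} (hn : 0 < n) :
    CRSet 𝕜 f^[n] ⊆ CRSet 𝕜 f := by
  intro x hx V hV hVb
  obtain ⟨k, hk, h⟩ := hx V hV hVb
  exact ⟨n * k, Nat.mul_pos hn hk, h.of_iterate (mem_of_mem_nhds hV) hn⟩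

theorem crSet_subset_crSet_iterate [IsTopologicalAddGroup X] [ContinuousSMul 𝕜 X]
    (f : X →+ X) (hf : Continuous f) (n : ℕ) : CRSet 𝕜 f ⊆ CRSet 𝕜 f^[n] := by
  intro x hx V hV _
  obtain ⟨U, hU, hUV⟩ := exists_nhds_zero_isVChain_iterate_sub_mem f hf n V hV
  obtain ⟨W, ⟨hW, hWb⟩, hWU⟩ := (nhds_basis_balanced 𝕜 X).mem_iff.mp hU
  obtain ⟨k, hk, h⟩ := hx W hW hWb
  refine ⟨k, hk, IsVChain.iterate_of_mul hUV ?_⟩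
  rw [Nat.mul_comm]
  exact (h.mul_left n).mono hWU

theorem crSet_iterate [IsTopologicalAddGroup X] [ContinuousSMul 𝕜 X]
    (f : X →+ X) (hf : Continuous f) {n : ℕ} (hn : 0 < n) : CRSet 𝕜 f^[n] = CRSet 𝕜 f :=
  (crSet_iterate_subset f hn).antisymm (crSet_subset_crSet_iterate f hf n)

end ChainRecurrence

/-- CR(T^n) = CR(T) for every n ≥ 1; consequently T is chain recurrent iff some
(equivalently, every) power T^n is chain recurrent. -/
theorem stmt17 {𝕜 X : Type*} [NontriviallyNormedField 𝕜] [AddCommGroup X] [Module 𝕜 X]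
    [TopologicalSpace X] [IsTopologicalAddGroup X] [ContinuousSMul 𝕜 X] (T : X →L[𝕜] X) :
    (∀ n : ℕ, 0 < n → CRSet 𝕜 (⇑(T ^ n)) = CRSet 𝕜 (⇑T)) ∧
    ((CRSet 𝕜 (⇑T) = Set.univ) ↔ ∃ n : ℕ, 0 < n ∧ CRSet 𝕜 (⇑(T ^ n)) = Set.univ) ∧
    ((CRSet 𝕜 (⇑T) = Set.univ) ↔ ∀ n : ℕ, 0 < n → CRSet 𝕜 (⇑(T ^ n)) = Set.univ) := by
  have hpow (n : ℕ) (hn : 0 < n) : CRSet 𝕜 (⇑(T ^ n)) = CRSet 𝕜 (⇑T) := by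
    rw [FunLike.coe_pow_eq_iterate]
    exact crSet_iterate (T : X →+ X) T.continuous hn
  refine ⟨hpow, ⟨fun h => ⟨1, one_pos, by rwa [pow_one]⟩, ?_⟩,
    ⟨fun h n hn => by rwa [hpow n hn], fun h => by simpa using h 1 one_pos⟩⟩
  rintro ⟨n, hn, h⟩
  rwa [← hpow n hn]
end

section
/- For a continuous linear operator T on a topological vector space X and n ∈ ℕ, T has the positive shadowing property if and only if T^n has the positive shadowing property. -/
/-- The positive shadowing property for a map on a topological vector space, with respect to
balanced neighborhoods of 0. -/
def PosShadowing (𝕜 : Type*) {X : Type*} [NontriviallyNormedField 𝕜] [AddCommGroup X]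
    [Module 𝕜 X] [TopologicalSpace X] (T : X → X) : Prop :=
  ∀ V ∈ nhds (0 : X), Balanced 𝕜 V → ∃ U ∈ nhds (0 : X), Balanced 𝕜 U ∧
    ∀ x : ℕ → X, (∀ j : ℕ, T (x j) - x (j + 1) ∈ U) →
      ∃ y : X, ∀ j : ℕ, x j - T^[j] y ∈ V

/-!
If `T` shadows, a pseudotrajectory `(x q)` of `T^n` becomes one of `T` after inserting the orbit
segments `x q, T (x q), …, T^(n-1) (x q)`, and the shadow of that sequence, read every `n` steps,
shadows `(x q)`. Conversely, `T^r (x a) - x (a + r)` is a sum of images of defects of `x` under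
`T^k`, `k < r`, so it is uniformly small for `r ≤ n` once the defects are; hence `(x (n * q))` is a
pseudotrajectory of `T^n`, and a shadow `z` of it shadows `x` at `n * q + r` because
`T^r (x (n * q) - T^(n * q) z)` is small by continuity of `T^r`, `r < n`.
Balancedness plays no role, since every neighbourhood of `0` contains a balanced one.
-/

open Filter Topology Finset

def NhdsPosShadowing {X : Type*} [AddGroup X] [TopologicalSpace X] (T : X → X) : Prop :=
  ∀ V ∈ 𝓝 (0 : X), ∃ U ∈ 𝓝 (0 : X),
    ∀ x : ℕ → X, (∀ j, T (x j) - x (j + 1) ∈ U) → ∃ y, ∀ j, x j - T^[j] y ∈ V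

theorem posShadowing_iff_nhdsPosShadowing {𝕜 X : Type*} [NontriviallyNormedField 𝕜]
    [AddCommGroup X] [Module 𝕜 X] [TopologicalSpace X] [ContinuousSMul 𝕜 X] (T : X → X) :
    PosShadowing 𝕜 T ↔ NhdsPosShadowing T := by
  have hbasis := nhds_basis_balanced 𝕜 X
  constructor
  · intro h V hV
    obtain ⟨V₀, ⟨hV₀, hV₀b⟩, hV₀V⟩ := hbasis.mem_iff.1 hV
    obtain ⟨U, hU, -, hUV₀⟩ := h V₀ hV₀ hV₀b
    exact ⟨U, hU, fun x hx => (hUV₀ x hx).imp fun y hy j => hV₀V (hy j)⟩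
  · intro h V hV _
    obtain ⟨U, hU, hUV⟩ := h V hV
    obtain ⟨U₀, ⟨hU₀, hU₀b⟩, hU₀U⟩ := hbasis.mem_iff.1 hU
    exact ⟨U₀, hU₀, hU₀b, fun x hx => hUV x fun j => hU₀U (hx j)⟩

section

variable {X : Type*} (T : X → X) (n : ℕ) (x : ℕ → X)

def interleaveOrbits (k : ℕ) : X := T^[k % n] (x (k / n))

theorem interleaveOrbits_apply {q r : ℕ} (hr : r < n) :
    interleaveOrbits T n x (n * q + r) = T^[r] (x q) := by
  have hn : 0 < n := by omega
  simp [interleaveOrbits, Nat.mod_eq_of_lt hr, Nat.mul_add_div hn, Nat.div_eq_of_lt hr]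

end

theorem NhdsPosShadowing.iterate {X : Type*} [AddGroup X] [TopologicalSpace X] {T : X → X}
    (h : NhdsPosShadowing T) {n : ℕ} (hn : 0 < n) : NhdsPosShadowing T^[n] := by
  intro V hV
  obtain ⟨U, hU, hUV⟩ := h V hV
  refine ⟨U, hU, fun x hx => ?_⟩
  have hz : ∀ k, T (interleaveOrbits T n x k) - interleaveOrbits T n x (k + 1) ∈ U := by
    intro k
    obtain ⟨q, r, hr, rfl⟩ : ∃ q r, r < n ∧ k = n * q + r :=
      ⟨k / n, k % n, Nat.mod_lt k hn, (Nat.div_add_mod k n).symm⟩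
    rw [interleaveOrbits_apply T n x hr, ← Function.iterate_succ_apply' T]
    obtain hr' | hrn : r + 1 < n ∨ r + 1 = n := by omega
    · rw [add_assoc, interleaveOrbits_apply T n x hr', sub_self]
      exact mem_of_mem_nhds hU
    · rw [add_assoc, hrn, ← mul_add_one n q, ← add_zero (n * (q + 1)),
        interleaveOrbits_apply T n x hn]
      simpa [hrn] using hx q
  obtain ⟨y, hy⟩ := hUV _ hz
  refine ⟨y, fun j => ?_⟩
  have hstart := interleaveOrbits_apply T n x (q := j) hn
  rw [add_zero, Function.iterate_zero_apply] at hstart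
  simpa [← Function.iterate_mul, hstart] using hy (n * j)

section

variable {X F : Type*} [AddCommGroup X] [FunLike F X X] [AddMonoidHomClass F X X]

theorem iterate_sub_eq_sum (T : F) (x : ℕ → X) (a r : ℕ) :
    T^[r] (x a) - x (a + r) =
      ∑ k ∈ range r, T^[k] (T (x (a + r - 1 - k)) - x (a + r - k)) := by
  induction r with
  | zero => simp
  | succ r ih =>
    have hsplit : T^[r + 1] (x a) - x (a + (r + 1)) =
        T (T^[r] (x a) - x (a + r)) + (T (x (a + r)) - x (a + r + 1)) := by
      rw [Function.iterate_succ_apply', map_sub, ← add_assoc]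
      abel
    rw [hsplit, ih, map_sum, sum_range_succ']
    congr 1
    refine sum_congr rfl fun k _ => ?_
    rw [Function.iterate_succ_apply', show a + (r + 1) - 1 - (k + 1) = a + r - 1 - k by omega,
      show a + (r + 1) - (k + 1) = a + r - k by omega]

end

section

variable {X F : Type*} [AddCommGroup X] [TopologicalSpace X] [IsTopologicalAddGroup X]
  [FunLike F X X] [AddMonoidHomClass F X X]

theorem eventually_smallSets_sum_iterate_mem (T : F) (hT : Continuous T) (m : ℕ) {N : Set X}
    (hN : N ∈ 𝓝 0) : ∀ᶠ U in (𝓝 (0 : X)).smallSets,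
      ∀ e : ℕ → X, (∀ k < m, e k ∈ U) → ∑ k ∈ range m, T^[k] (e k) ∈ N := by
  induction m generalizing N with
  | zero => exact Eventually.of_forall fun U e _ => by simpa using mem_of_mem_nhds hN
  | succ m ih =>
    obtain ⟨W, hW, hWN⟩ := exists_nhds_zero_half hN
    have hpre : T^[m] ⁻¹' W ∈ 𝓝 0 := (hT.iterate m).tendsto' 0 0 (iterate_map_zero T m) hW
    filter_upwards [ih hW, eventually_smallSets_subset.2 hpre] with U hsum hsub e he
    rw [sum_range_succ]
    exact hWN _ (hsum e fun k hk => he k (by omega)) _ (hsub (he m (by omega)))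

theorem NhdsPosShadowing.of_iterate (T : F) (hT : Continuous T) {n : ℕ} (hn : 0 < n)
    (h : NhdsPosShadowing T^[n]) : NhdsPosShadowing T := by
  intro V hV
  obtain ⟨W, hW, hWV⟩ := exists_nhds_half_neg hV
  have hV' : {v | ∀ r < n, T^[r] v ∈ W} ∈ 𝓝 (0 : X) :=
    (eventually_all_finite (Set.finite_lt_nat n)).2 fun r _ =>
      (hT.iterate r).tendsto' 0 0 (iterate_map_zero T r) hW
  obtain ⟨U', hU', hshadow⟩ := h _ hV'
  obtain ⟨U, hU, hsum⟩ := eventually_smallSets.1 <|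
    (eventually_all_finite (Set.finite_le_nat n)).2 fun r _ =>
      eventually_smallSets_sum_iterate_mem T hT r (inter_mem hU' hW)
  refine ⟨U, hU, fun x hx => ?_⟩
  have hdrift : ∀ a, ∀ r ≤ n, T^[r] (x a) - x (a + r) ∈ U' ∩ W := fun a r hr => by
    rw [iterate_sub_eq_sum]
    refine hsum U subset_rfl r hr _ fun k hk => ?_
    convert hx (a + r - 1 - k) using 3
    omega
  obtain ⟨z, hz⟩ := hshadow (fun q => x (n * q)) fun q => by
    simpa [mul_add_one] using (hdrift (n * q) n le_rfl).1
  refine ⟨z, fun m => ?_⟩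
  obtain ⟨q, r, hr, rfl⟩ : ∃ q r, r < n ∧ m = n * q + r :=
    ⟨m / n, m % n, Nat.mod_lt m hn, (Nat.div_add_mod m n).symm⟩
  have hshadowed : T^[r] (x (n * q) - T^[n * q] z) ∈ W := by
    simpa [Function.iterate_mul] using hz q r hr
  have hdiff := hWV _ hshadowed _ (hdrift (n * q) r hr.le).2
  rwa [iterate_map_sub, ← Function.iterate_add_apply, sub_sub_sub_cancel_left, add_comm r] at hdiff

end

/-- T has the positive shadowing property iff T^n does. -/
theorem stmt18 {𝕜 X : Type*} [NontriviallyNormedField 𝕜] [AddCommGroup X] [Module 𝕜 X]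
    [TopologicalSpace X] [IsTopologicalAddGroup X] [ContinuousSMul 𝕜 X] (T : X →L[𝕜] X)
    (n : ℕ) (hn : 0 < n) :
    PosShadowing 𝕜 (⇑T) ↔ PosShadowing 𝕜 (⇑(T ^ n)) := by
  rw [posShadowing_iff_nhdsPosShadowing, posShadowing_iff_nhdsPosShadowing,
    FunLike.coe_pow_eq_iterate]
  exact ⟨fun h => h.iterate hn, .of_iterate T T.continuous hn⟩
end
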